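/- arXiv:2510.26743 — 8 statements merged into one kernel-verified Lean document; each statement's English description precedes it below -/
import Mathlib

section
/- Let k, n ≥ 1 be integers and p a prime with p > k. Then ∑_{ν=0}^{n} C(n,ν) (-1)^{n-ν} C(ν(p-1), k) ≡ (-1)^k C(k-1, n-1) (mod p), where C(x,k) denotes the binomial coefficient polynomial evaluated at x = ν(p-1). -/
open Finset Nat

lemma factorial_mul_choose_int (m k : ℕ) :
    (k ! : ℤ) * (m.choose k : ℤ) = ∏ i ∈ range k, ((m : ℤ) - i) := by
  rcases le_or_gt k m with h | h
  · have h1 : ((m.descFactorial k : ℕ) : ℤ) = ∏ i ∈ range k, ((m : ℤ) - i) := by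
      rw [Nat.descFactorial_eq_prod_range, Nat.cast_prod]
      refine Finset.prod_congr rfl fun i hi => ?_
      have : i ≤ m := le_trans (le_of_lt (mem_range.mp hi)) h
      push_cast [Nat.cast_sub this]
      ring
    rw [← h1, Nat.descFactorial_eq_factorial_mul_choose]
    push_cast
    ring
  · rw [Nat.choose_eq_zero_of_lt h, Nat.cast_zero, mul_zero]
    refine (Finset.prod_eq_zero (mem_range.mpr h) ?_).symm
    simp

lemma choose_cast_zmod (p : ℕ) [hp : Fact p.Prime] (k ν : ℕ) (hk : 1 ≤ k) (hkp : k < p) :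
    (((ν * (p - 1)).choose k : ℕ) : ZMod p) = (-1) ^ k * (((ν + (k - 1)).choose k : ℕ) : ZMod p) := by
  have hfact : ((k ! : ℕ) : ZMod p) ≠ 0 := by
    rw [Ne, ZMod.natCast_eq_zero_iff]
    intro h
    exact absurd ((Nat.Prime.dvd_factorial hp.out).mp h) (not_le.mpr hkp)
  apply mul_left_cancel₀ hfact
  have h1 := congrArg (Int.cast : ℤ → ZMod p) (factorial_mul_choose_int (ν * (p - 1)) k)
  have h2 := congrArg (Int.cast : ℤ → ZMod p) (factorial_mul_choose_int (ν + (k - 1)) k)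
  push_cast at h1 h2
  rw [h1, show ((k ! : ℕ) : ZMod p) * ((-1) ^ k * (((ν + (k - 1)).choose k : ℕ) : ZMod p))
      = (-1) ^ k * (((k ! : ℕ) : ZMod p) * (((ν + (k - 1)).choose k : ℕ) : ZMod p)) from by ring,
    h2]
  have hL : ∀ i ∈ range k, (ν : ZMod p) * ((p - 1 : ℕ) : ZMod p) - (i : ℕ)
      = -(((ν : ZMod p) + i)) := by
    intro i _
    have hcast : ((p - 1 : ℕ) : ZMod p) = -1 := by
      rw [Nat.cast_sub hp.out.one_le]
      simp
    rw [hcast]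
    ring
  have hR : ∀ i ∈ range k, (ν : ZMod p) + ((k - 1 : ℕ) : ZMod p) - (i : ℕ)
      = (ν : ZMod p) + ((k - 1 - i : ℕ) : ZMod p) := by
    intro i hi
    have hik : i ≤ k - 1 := by have := Finset.mem_range.mp hi; omega
    rw [Nat.cast_sub hik]
    ring
  rw [Finset.prod_congr rfl hL, Finset.prod_congr rfl hR]
  rw [Finset.prod_range_reflect (fun i => (ν : ZMod p) + ((i : ℕ) : ZMod p)) k]
  simp only [neg_eq_neg_one_mul ((ν : ZMod p) + _)]
  rw [Finset.prod_mul_distrib, Finset.prod_const, Finset.card_range]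

lemma fwdDiff_comp_add_nat (f : ℕ → ℤ) (c : ℕ) :
    fwdDiff 1 (fun x ↦ f (x + c)) = fun x ↦ fwdDiff 1 f (x + c) := by
  funext x
  simp only [fwdDiff]
  rw [show x + 1 + c = x + c + 1 by omega]

lemma fwdDiff_iter_comp_add_nat (f : ℕ → ℤ) (c n : ℕ) :
    (fwdDiff 1)^[n] (fun x ↦ f (x + c)) = fun x ↦ (fwdDiff 1)^[n] f (x + c) := by
  induction n with
  | zero => rfl
  | succ n ih =>
      rw [Function.iterate_succ_apply', ih, fwdDiff_comp_add_nat]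
      funext x
      exact (congrFun (Function.iterate_succ_apply' (fwdDiff 1) n f) (x + c)).symm

lemma fwdDiff_iter_zero_fun (t : ℕ) :
    (fwdDiff (1 : ℕ))^[t] (fun _ ↦ (0 : ℤ)) = fun _ ↦ 0 := by
  induction t with
  | zero => rfl
  | succ t ih => rw [Function.iterate_succ_apply, fwdDiff_const, ih]

lemma key_sum (k n : ℕ) (hk : 1 ≤ k) (hn : 1 ≤ n) :
    ∑ ν ∈ range (n + 1), (n.choose ν : ℤ) * (-1) ^ (n - ν) * ((ν + (k - 1)).choose k : ℤ)
      = ((k - 1).choose (n - 1) : ℤ) := by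
  have h := fwdDiff_iter_eq_sum_shift (1 : ℕ) (fun x ↦ ((x + (k - 1)).choose k : ℤ)) n 0
  simp only [smul_eq_mul, zero_add, smul_eq_mul, mul_one] at h
  have hsum : ∑ ν ∈ range (n + 1), (n.choose ν : ℤ) * (-1) ^ (n - ν) * ((ν + (k - 1)).choose k : ℤ)
      = (fwdDiff 1)^[n] (fun x ↦ ((x + (k - 1)).choose k : ℤ)) 0 := by
    rw [h]
    exact Finset.sum_congr rfl fun ν _ => by ring
  rw [hsum, fwdDiff_iter_comp_add_nat (fun x ↦ (x.choose k : ℤ)) (k - 1) n]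
  simp only [Nat.zero_add]
  rcases le_or_gt n k with hnk | hnk
  · have hkey : (fwdDiff 1)^[n] (fun x ↦ (x.choose k : ℤ)) = fun x ↦ (x.choose (k - n) : ℤ) := by
      have := fwdDiff_iter_choose (k - n) n
      rwa [show n + (k - n) = k by omega] at this
    rw [hkey]
    show ((k - 1).choose (k - n) : ℤ) = _
    have h2 : k - n ≤ k - 1 := by omega
    rw [← Nat.choose_symm h2, show k - 1 - (k - n) = n - 1 by omega]
  · have hsplit : n = (n - k - 1) + 1 + k := by omega
    rw [hsplit, Function.iterate_add_apply]
    have h0 : (fwdDiff 1)^[k] (fun x ↦ (x.choose k : ℤ)) = fun _ ↦ (1 : ℤ) := by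
      have := fwdDiff_iter_choose 0 k
      rw [Nat.add_zero] at this
      rw [this]
      funext x; simp
    rw [h0, Function.iterate_succ_apply, fwdDiff_const, fwdDiff_iter_zero_fun]
    rw [Nat.choose_eq_zero_of_lt (by omega)]
    simp

theorem binom_forward_difference (k n p : ℕ) (hk : 1 ≤ k) (hn : 1 ≤ n)
    (hp : p.Prime) (hkp : k < p) :
    (p : ℤ) ∣ (∑ ν ∈ Finset.range (n + 1),
        (n.choose ν : ℤ) * (-1) ^ (n - ν) * ((ν * (p - 1)).choose k : ℤ))
      - (-1) ^ k * ((k - 1).choose (n - 1) : ℤ) := by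
  haveI : Fact p.Prime := ⟨hp⟩
  rw [← ZMod.intCast_zmod_eq_zero_iff_dvd]
  push_cast
  rw [sub_eq_zero]
  have hS : ∑ ν ∈ Finset.range (n + 1),
      ((n.choose ν : ZMod p)) * (-1) ^ (n - ν) * (((ν * (p - 1)).choose k : ℕ) : ZMod p)
      = (-1) ^ k * ∑ ν ∈ Finset.range (n + 1),
        ((n.choose ν : ZMod p)) * (-1) ^ (n - ν) * (((ν + (k - 1)).choose k : ℕ) : ZMod p) := by
    rw [Finset.mul_sum]
    refine Finset.sum_congr rfl fun ν _ => ?_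
    rw [choose_cast_zmod p k ν hk hkp]
    ring
  rw [hS]
  congr 1
  have hcast := congrArg (Int.cast : ℤ → ZMod p) (key_sum k n hk hn)
  push_cast at hcast
  exact hcast
end

section
/- Let p be an odd prime and define Q_p(n) = ∑_{a=1}^{p-1} q_p(a)^n for n ≥ 1, where q_p(a) = (a^(p-1)-1)/p. Then for every n ≥ 1, Q_p(n) = (1/p^{n-1}) ∑_{ν=0}^{n} C(n,ν) (-1)^{n-ν} Ŝ_{ν(p-1)}(p), where Ŝ_m(p) = (S_m(p) - S_0(p))/p with S_m(p) = ∑_{j=1}^{p-1} j^m and Ŝ_0(p) = 0. -/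
theorem fermat_quotient_power_sum_formula (p : ℕ) (hp : p.Prime) (hodd : Odd p)
    (n : ℕ) (hn : 1 ≤ n)
    (S : ℕ → ℚ) (hS : ∀ m, S m = ∑ j ∈ Finset.Icc 1 (p - 1), (j : ℚ) ^ m)
    (Sh : ℕ → ℚ) (hSh0 : Sh 0 = 0)
    (hSh : ∀ m, 0 < m → Sh m = (S m - S 0) / p) :
    ∑ a ∈ Finset.Icc 1 (p - 1), (((a : ℚ) ^ (p - 1) - 1) / p) ^ n =
      (1 / (p : ℚ) ^ (n - 1)) *
        ∑ ν ∈ Finset.range (n + 1),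
          (n.choose ν : ℚ) * (-1) ^ (n - ν) * Sh (ν * (p - 1)) := by
  have hp2 : 2 ≤ p := hp.two_le
  have hpQ : (p : ℚ) ≠ 0 := Nat.cast_ne_zero.mpr hp.pos.ne'
  -- Sh in terms of S, valid for all ν
  have hSh' : ∀ ν : ℕ, Sh (ν * (p - 1)) = (S (ν * (p - 1)) - S 0) / p := by
    intro ν
    rcases Nat.eq_zero_or_pos ν with h | h
    · simp [h, hSh0]
    · exact hSh _ (Nat.mul_pos h (by omega))
  set T : ℚ := ∑ ν ∈ Finset.range (n + 1),
      (n.choose ν : ℚ) * (-1) ^ (n - ν) * S (ν * (p - 1)) with hT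
  -- alternating sum of binomial coefficients vanishes
  have key0 : ∑ ν ∈ Finset.range (n + 1), (n.choose ν : ℚ) * (-1) ^ (n - ν) = 0 := by
    have h := sub_pow (1 : ℚ) 1 n
    rw [sub_self, zero_pow (by omega)] at h
    rw [← h.symm]
    apply Finset.sum_congr rfl
    intro ν hν
    rw [Finset.mem_range] at hν
    have : (-1 : ℚ) ^ (n - ν) = (-1) ^ (ν + n) := by
      rw [show ν + n = (n - ν) + 2 * ν by omega, pow_add]
      simp [pow_mul]
    rw [this]; ring
  -- LHS
  have hL : ∑ a ∈ Finset.Icc 1 (p - 1), (((a : ℚ) ^ (p - 1) - 1) / p) ^ n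
      = T / (p : ℚ) ^ n := by
    simp_rw [div_pow, ← Finset.sum_div]
    congr 1
    have expand : ∀ a ∈ Finset.Icc 1 (p - 1),
        ((a : ℚ) ^ (p - 1) - 1) ^ n
          = ∑ ν ∈ Finset.range (n + 1),
              (n.choose ν : ℚ) * (-1) ^ (n - ν) * (a : ℚ) ^ (ν * (p - 1)) := by
      intro a _
      rw [sub_pow]
      apply Finset.sum_congr rfl
      intro ν hν
      rw [Finset.mem_range] at hν
      have : (-1 : ℚ) ^ (n - ν) = (-1) ^ (ν + n) := by
        rw [show ν + n = (n - ν) + 2 * ν by omega, pow_add]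
        simp [pow_mul]
      rw [this, pow_mul]
      ring
    rw [Finset.sum_congr rfl expand, Finset.sum_comm]
    apply Finset.sum_congr rfl
    intro ν _
    rw [hS, Finset.mul_sum]
  -- RHS
  have hR : ∑ ν ∈ Finset.range (n + 1),
      (n.choose ν : ℚ) * (-1) ^ (n - ν) * Sh (ν * (p - 1)) = T / p := by
    simp_rw [hSh']
    have : ∀ ν : ℕ, (n.choose ν : ℚ) * (-1) ^ (n - ν) * ((S (ν * (p - 1)) - S 0) / p)
        = (n.choose ν : ℚ) * (-1) ^ (n - ν) * S (ν * (p - 1)) / p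
          - ((n.choose ν : ℚ) * (-1) ^ (n - ν)) * (S 0 / p) := by
      intro ν; ring
    simp_rw [this]
    rw [Finset.sum_sub_distrib, ← Finset.sum_mul, key0, zero_mul, sub_zero,
      ← Finset.sum_div]
  rw [hL, hR]
  have hpow : (p : ℚ) ^ n = (p : ℚ) ^ (n - 1) * p := by
    rw [← pow_succ]; congr 1; omega
  rw [hpow]; field_simp
end

section
/- Let p ≥ 7 be a prime and let n = d(p-1) for some integer d with 1 ≤ d ≤ p. Then Ŝ_n(p) ≡ B̂_n + p² C(n,3) B̂_{n-2}/(n-2) + p⁴ C(n,5) B̂_{n-4}/(n-4) (mod p⁵), where B̂_m denotes the p-adjusted Bernoulli number. -/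
open Finset

variable {p : ℕ} [hp : Fact p.Prime]

private lemma pz_le {a b : ℤ} (h : a ≤ b) : ((p:ℝ))^a ≤ (p:ℝ)^b :=
  zpow_le_zpow_right₀ (by exact_mod_cast hp.out.one_lt.le) h

private lemma my_inv_le_one {m : ℕ} (h : ¬ p ∣ m) : ‖((m : ℚ_[p]))⁻¹‖ ≤ (p:ℝ)^(0:ℤ) := by
  rw [norm_inv, zpow_zero]
  have h1 : ‖((m:ℤ) : ℚ_[p])‖ ≤ 1 := Padic.norm_int_le_one _
  have h2 : ¬ ‖((m:ℤ) : ℚ_[p])‖ < 1 := by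
    rw [Padic.norm_intCast_lt_one_iff]; exact_mod_cast h
  push_cast at h1 h2
  have : ‖(m : ℚ_[p])‖ = 1 := le_antisymm h1 (not_lt.mp h2)
  rw [this]; norm_num

private lemma inv_le_p {m : ℕ} (h0 : 0 < m) (h2 : m < p^2) :
    ‖((m : ℚ_[p]))⁻¹‖ ≤ (p:ℝ)^(1:ℤ) := by
  by_cases hd : p ∣ m
  · obtain ⟨t, rfl⟩ := hd
    have ht : ¬ p ∣ t := by
      rintro ⟨s, rfl⟩
      have := h2
      nlinarith [hp.out.two_le, Nat.one_le_iff_ne_zero.mpr (show s ≠ 0 by rintro rfl; simp at h0)]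
    have h1 : ‖((t : ℚ_[p]))⁻¹‖ ≤ (p:ℝ)^(0:ℤ) := my_inv_le_one ht
    push_cast
    rw [mul_inv, norm_mul, norm_inv, Padic.norm_p, inv_inv, zpow_one]
    calc (p:ℝ) * ‖((t : ℚ_[p]))⁻¹‖ ≤ (p:ℝ) * 1 := by
          apply mul_le_mul_of_nonneg_left _ (by positivity)
          simpa using h1
      _ = p := mul_one _
  · exact (my_inv_le_one hd).trans (pz_le (by norm_num))

private lemma sum_pow_dvd (i : ℕ) (hi : ¬ (p - 1) ∣ i) :
    p ∣ ∑ j ∈ range p, j ^ i := by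
  have hi0 : i ≠ 0 := by rintro rfl; exact hi (dvd_zero _)
  rw [← ZMod.natCast_eq_zero_iff]
  push_cast
  have hcard : Fintype.card (ZMod p) = p := ZMod.card p
  have hswap : ∑ j ∈ range p, ((j : ZMod p)) ^ i = ∑ x : ZMod p, x ^ i := by
    exact Finset.sum_nbij' (fun j => ((j : ZMod p))) (fun x => x.val)
      (fun a _ => mem_univ _) (fun a _ => mem_range.mpr (ZMod.val_lt a))
      (fun a ha => ZMod.val_cast_of_lt (mem_range.mp ha))
      (fun a _ => ZMod.natCast_zmod_val a) (fun a _ => rfl)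
  rw [hswap]
  set r := i % (p - 1) with hr
  have hrne : r ≠ 0 := fun h => hi (Nat.dvd_of_mod_eq_zero h)
  have hrlt : r < p - 1 := Nat.mod_lt _ (by have := hp.out.two_le; omega)
  have hstep : ∀ x : ZMod p, x ^ i = x ^ r := by
    intro x
    by_cases hx : x = 0
    · subst hx; rw [zero_pow hi0, zero_pow hrne]
    · conv_lhs => rw [← Nat.div_add_mod i (p-1)]
      rw [pow_add, pow_mul, ZMod.pow_card_sub_one_eq_one hx, one_pow, one_mul]
  simp_rw [hstep]
  exact FiniteField.sum_pow_lt_card_sub_one (K := ZMod p) r (by rw [hcard]; exact hrlt)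

private lemma nat_norm_le_one (C : ℕ) : ‖((C : ℚ_[p]))‖ ≤ (p:ℝ)^(0:ℤ) := by
  have h := Padic.norm_int_le_one (p := p) (C : ℤ)
  rw [zpow_zero]
  rwa [show (((C:ℤ)) : ℚ_[p]) = (C : ℚ_[p]) by push_cast; ring] at h

private lemma nat_norm_le_inv {C : ℕ} (h : p ∣ C) : ‖((C : ℚ_[p]))‖ ≤ (p:ℝ)^(-1:ℤ) := by
  have : ‖(((C:ℤ)) : ℚ_[p])‖ ≤ (p:ℝ)^(-(1:ℕ):ℤ) := by
    rw [Padic.norm_int_le_pow_iff_dvd]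
    exact_mod_cast (pow_one p ▸ h)
  simpa using this

private lemma term_eq {N k : ℕ} (hk : k ≤ N) (x : ℚ) :
    (((N+1).choose k : ℚ)) * x / (N+1) = (N.choose k : ℚ) * x * (((N+1-k : ℕ)) : ℚ)⁻¹ := by
  have hnat : (N+1).choose k * (N+1-k) = (N+1) * N.choose k :=
    ((Nat.add_one_mul_choose_eq N k).trans (Nat.choose_succ_right_eq (N+1) k)).symm
  have hq : ((N+1).choose k : ℚ) * ((N+1-k : ℕ) : ℚ) = ((N+1 : ℕ) : ℚ) * (N.choose k : ℚ) := by
    exact_mod_cast congrArg (Nat.cast : ℕ → ℚ) hnat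
  have hm : (((N+1-k : ℕ)) : ℚ) ≠ 0 := Nat.cast_ne_zero.mpr (by omega)
  have hN : ((N:ℚ)+1) ≠ 0 := by positivity
  push_cast at hq
  field_simp
  linear_combination x * hq

private lemma gterm_eq {N k : ℕ} (hk : k ≤ N) (B x : ℚ) :
    B * (((N+1).choose k : ℚ)) * x / (N+1) = B * (N.choose k : ℚ) * x * (((N+1-k : ℕ)) : ℚ)⁻¹ := by
  have h := term_eq hk x
  linear_combination B * h

private lemma quad_norm_le {B : ℚ} {bz cz mz : ℤ} {C E m : ℕ}
    (hB : ‖((B : ℚ) : ℚ_[p])‖ ≤ (p:ℝ)^bz) (hC : ‖((C : ℚ_[p]))‖ ≤ (p:ℝ)^cz)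
    (hm : ‖((m : ℚ_[p]))⁻¹‖ ≤ (p:ℝ)^mz) :
    ‖((B * C * (p:ℚ)^E * ((m : ℕ) : ℚ)⁻¹ : ℚ) : ℚ_[p])‖ ≤ (p:ℝ)^(bz + cz - E + mz) := by
  have hp0 : (p:ℝ) ≠ 0 := by exact_mod_cast hp.out.pos.ne'
  push_cast
  rw [norm_mul, norm_mul, norm_mul]
  have h1 : ‖((p:ℚ_[p]))^E‖ = (p:ℝ)^(-(E:ℤ)) := Padic.norm_p_pow E
  calc ‖(B : ℚ_[p])‖ * ‖((C : ℚ_[p]))‖ * ‖((p:ℚ_[p]))^E‖ * ‖((m : ℚ_[p]))⁻¹‖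
      ≤ (p:ℝ)^bz * (p:ℝ)^cz * (p:ℝ)^(-(E:ℤ)) * (p:ℝ)^mz := by
        apply mul_le_mul _ hm (norm_nonneg _) (by positivity)
        apply mul_le_mul _ (le_of_eq h1) (norm_nonneg _) (by positivity)
        exact mul_le_mul hB hC (norm_nonneg _) (by positivity)
    _ = (p:ℝ)^(bz + cz - E + mz) := by
        rw [← zpow_add₀ hp0, ← zpow_add₀ hp0, ← zpow_add₀ hp0, sub_eq_add_neg]

private lemma bern_key (hp7 : 7 ≤ p) (i : ℕ) (hi : i ≤ p * (p-1))
    (IH : ∀ k, k < i → ‖((bernoulli k : ℚ) : ℚ_[p])‖ ≤ (p:ℝ)^(1:ℤ)) :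
    ‖((((p:ℚ) * bernoulli i - ((∑ j ∈ range p, j^i : ℕ) : ℚ)) : ℚ) : ℚ_[p])‖ ≤ (p:ℝ)^(-1:ℤ) := by
  have hsq : p * (p-1) + 1 < p^2 := by
    have h2 : 2 ≤ p := hp.out.two_le
    obtain ⟨a, rfl⟩ : ∃ a, p = a+2 := ⟨p-2, by omega⟩
    have h1 : a+2-1 = a+1 := rfl
    rw [h1]
    nlinarith
  have hfaul : ((∑ j ∈ range p, j^i : ℕ) : ℚ)
      = ∑ k ∈ range (i+1), bernoulli k * (((i+1).choose k : ℕ) : ℚ) * (p:ℚ)^(i+1-k) / ((i:ℚ)+1) := by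
    rw [show ((∑ j ∈ range p, j^i : ℕ) : ℚ) = ∑ j ∈ range p, (j:ℚ)^i by push_cast; ring]
    have := sum_range_pow p i
    rw [this]
  have hlast : bernoulli i * (((i+1).choose i : ℕ) : ℚ) * (p:ℚ)^(i+1-i) / ((i:ℚ)+1)
      = (p:ℚ) * bernoulli i := by
    rw [Nat.choose_succ_self_right, show i+1-i = 1 by omega]
    have : ((i:ℚ)+1) ≠ 0 := by positivity
    push_cast
    field_simp
  rw [hfaul, Finset.sum_range_succ, hlast]
  rw [show (p:ℚ) * bernoulli i - (∑ k ∈ range i, bernoulli k * (((i+1).choose k : ℕ) : ℚ) * (p:ℚ)^(i+1-k) / ((i:ℚ)+1) + (p:ℚ) * bernoulli i) = -(∑ k ∈ range i, bernoulli k * (((i+1).choose k : ℕ) : ℚ) * (p:ℚ)^(i+1-k) / ((i:ℚ)+1)) by ring]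
  rw [Rat.cast_neg, norm_neg, Rat.cast_sum]
  apply IsUltrametricDist.norm_sum_le_of_forall_le_of_nonneg (by positivity)
  intro k hk
  have hki : k < i := mem_range.mp hk
  have hgk : bernoulli k * (((i+1).choose k : ℕ) : ℚ) * (p:ℚ)^(i+1-k) / ((i:ℚ)+1)
      = bernoulli k * ((i.choose k : ℕ) : ℚ) * (p:ℚ)^(i+1-k) * (((i+1-k : ℕ)) : ℚ)⁻¹ := by
    have := gterm_eq (N := i) (k := k) hki.le (bernoulli k) ((p:ℚ)^(i+1-k))
    rw [← this]
  rw [hgk]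
  set m := i + 1 - k with hm
  have hm2 : 2 ≤ m := by omega
  have hmlt : m < p^2 := by omega
  by_cases hpm : p ∣ m
  · have hm7 : 7 ≤ m := le_trans hp7 (Nat.le_of_dvd (by omega) hpm)
    have := quad_norm_le (p := p) (C := i.choose k) (E := m) (m := m) (IH k hki) (nat_norm_le_one _) (inv_le_p (by omega) hmlt)
    exact this.trans (pz_le (by omega))
  · have := quad_norm_le (p := p) (C := i.choose k) (E := m) (m := m) (IH k hki) (nat_norm_le_one _) (my_inv_le_one hpm)
    exact this.trans (pz_le (by omega))

private lemma bern_le (hp7 : 7 ≤ p) :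
    ∀ i, i ≤ p * (p-1) → ‖((bernoulli i : ℚ) : ℚ_[p])‖ ≤ (p:ℝ)^(1:ℤ) := by
  intro i
  induction i using Nat.strong_induction_on with
  | _ i IH =>
    intro hi
    have hkey := bern_key hp7 i hi (fun k hk => IH k hk (le_trans hk.le hi))
    have hA : ‖(((∑ j ∈ range p, j^i : ℕ) : ℚ) : ℚ_[p])‖ ≤ 1 := by
      have := nat_norm_le_one (p := p) (∑ j ∈ range p, j^i)
      rw [zpow_zero] at this
      rwa [show (((∑ j ∈ range p, j^i : ℕ) : ℚ) : ℚ_[p]) = ((∑ j ∈ range p, j^i : ℕ) : ℚ_[p]) by push_cast; ring]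
    have hPB : ‖((((p:ℚ) * bernoulli i) : ℚ) : ℚ_[p])‖ ≤ 1 := by
      have h := Padic.nonarchimedean
        ((((p:ℚ) * bernoulli i - ((∑ j ∈ range p, j^i : ℕ) : ℚ)) : ℚ) : ℚ_[p])
        ((((∑ j ∈ range p, j^i : ℕ) : ℚ)) : ℚ_[p])
      rw [show ((((p:ℚ) * bernoulli i - ((∑ j ∈ range p, j^i : ℕ) : ℚ)) : ℚ) : ℚ_[p])
          + ((((∑ j ∈ range p, j^i : ℕ) : ℚ)) : ℚ_[p]) = ((((p:ℚ) * bernoulli i) : ℚ) : ℚ_[p]) by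
        push_cast; ring] at h
      refine h.trans (max_le (hkey.trans ?_) hA)
      calc (p:ℝ)^(-1:ℤ) ≤ (p:ℝ)^(0:ℤ) := pz_le (by norm_num)
        _ = 1 := zpow_zero _
    have hppos : (0:ℝ) < p := by exact_mod_cast hp.out.pos
    rw [show ((((p:ℚ) * bernoulli i) : ℚ) : ℚ_[p]) = (p : ℚ_[p]) * ((bernoulli i : ℚ) : ℚ_[p]) by
      push_cast; ring, norm_mul, Padic.norm_p] at hPB
    rw [zpow_one]
    calc ‖((bernoulli i : ℚ) : ℚ_[p])‖ = (p:ℝ) * ((p:ℝ)⁻¹ * ‖((bernoulli i : ℚ) : ℚ_[p])‖) := by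
          field_simp
      _ ≤ (p:ℝ) * 1 := by apply mul_le_mul_of_nonneg_left hPB (by positivity)
      _ = p := mul_one _

private lemma bern_le' (hp7 : 7 ≤ p) {i : ℕ} (hi : i ≤ p * (p-1)) (hnd : ¬ (p-1) ∣ i) :
    ‖((bernoulli i : ℚ) : ℚ_[p])‖ ≤ (p:ℝ)^(0:ℤ) := by
  have hkey := bern_key hp7 i hi (fun k hk => bern_le hp7 k (le_trans hk.le hi))
  have hA : ‖(((∑ j ∈ range p, j^i : ℕ) : ℚ) : ℚ_[p])‖ ≤ (p:ℝ)^(-1:ℤ) := by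
    have := nat_norm_le_inv (p := p) (sum_pow_dvd i hnd)
    rwa [show (((∑ j ∈ range p, j^i : ℕ) : ℚ) : ℚ_[p]) = ((∑ j ∈ range p, j^i : ℕ) : ℚ_[p]) by push_cast; ring]
  have hPB : ‖((((p:ℚ) * bernoulli i) : ℚ) : ℚ_[p])‖ ≤ (p:ℝ)^(-1:ℤ) := by
    have h := Padic.nonarchimedean
      ((((p:ℚ) * bernoulli i - ((∑ j ∈ range p, j^i : ℕ) : ℚ)) : ℚ) : ℚ_[p])
      ((((∑ j ∈ range p, j^i : ℕ) : ℚ)) : ℚ_[p])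
    rw [show ((((p:ℚ) * bernoulli i - ((∑ j ∈ range p, j^i : ℕ) : ℚ)) : ℚ) : ℚ_[p])
        + ((((∑ j ∈ range p, j^i : ℕ) : ℚ)) : ℚ_[p]) = ((((p:ℚ) * bernoulli i) : ℚ) : ℚ_[p]) by
      push_cast; ring] at h
    exact h.trans (max_le hkey hA)
  have hppos : (0:ℝ) < p := by exact_mod_cast hp.out.pos
  rw [show ((((p:ℚ) * bernoulli i) : ℚ) : ℚ_[p]) = (p : ℚ_[p]) * ((bernoulli i : ℚ) : ℚ_[p]) by
    push_cast; ring, norm_mul, Padic.norm_p] at hPB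
  rw [zpow_zero]
  calc ‖((bernoulli i : ℚ) : ℚ_[p])‖ = (p:ℝ) * ((p:ℝ)⁻¹ * ‖((bernoulli i : ℚ) : ℚ_[p])‖) := by
        field_simp
    _ ≤ (p:ℝ) * (p:ℝ)^(-1:ℤ) := mul_le_mul_of_nonneg_left hPB (by positivity)
    _ = 1 := by rw [zpow_neg_one]; field_simp
private lemma hsq_lemma (hp2 : 2 ≤ p) : p * (p-1) + 1 < p^2 := by
  obtain ⟨a, rfl⟩ : ∃ a, p = a+2 := ⟨p-2, by omega⟩
  have h1 : a+2-1 = a+1 := rfl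
  rw [h1]
  nlinarith

private lemma main_term_le (hp7 : 7 ≤ p) {n k : ℕ} (hn6 : 6 ≤ n) (hnle : n ≤ p*(p-1))
    (hdvd : (p-1) ∣ n) (hk : k ≤ n - 5)
    (h7 : p = 7 → k = n - 6 → 1 ≤ k → p ∣ n.choose k) :
    ‖(((bernoulli k * ((n.choose k : ℕ) : ℚ) * (p:ℚ)^(n-k) * (((n+1-k : ℕ)) : ℚ)⁻¹) : ℚ) : ℚ_[p])‖
      ≤ (p:ℝ)^(-5:ℤ) := by
  have hp2 : 2 ≤ p := hp.out.two_le
  have hp61 : 6 ≤ p - 1 := by omega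
  have hsq : p * (p-1) + 1 < p^2 := hsq_lemma hp2
  have hE5 : 5 ≤ n - k := by omega
  have hklen : k ≤ n := by omega
  have hmlt : n + 1 - k < p^2 := by omega
  by_cases hodd : Odd k ∧ 1 < k
  · rw [bernoulli_eq_bernoulli'_of_ne_one (by omega), bernoulli'_eq_zero_of_odd hodd.1 hodd.2]
    simp only [zero_mul, Rat.cast_zero, norm_zero]
    positivity
  · by_cases hnd : (p-1) ∣ k
    · rcases Nat.eq_zero_or_pos k with hk0 | hk1
      · subst hk0
        have hB : ‖((bernoulli 0 : ℚ) : ℚ_[p])‖ ≤ (p:ℝ)^(0:ℤ) := by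
          rw [bernoulli_zero]; norm_num
        have := quad_norm_le (p := p) (C := n.choose 0) (E := n - 0) (m := n + 1 - 0)
          hB (nat_norm_le_one _) (inv_le_p (by omega) hmlt)
        exact this.trans (pz_le (by omega))
      · have hEdvd : (p-1) ∣ (n - k) := Nat.dvd_sub hdvd hnd
        have hE : p - 1 ≤ n - k := Nat.le_of_dvd (by omega) hEdvd
        have hB := bern_le hp7 k (le_trans hklen hnle)
        by_cases hpm : p ∣ (n + 1 - k)
        · have hmp : n + 1 - k = p := by
            obtain ⟨j, hj⟩ := hpm
            have hj1 : 1 ≤ j := by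
              rcases Nat.eq_zero_or_pos j with h | h
              · subst h; omega
              · exact h
            have hpj : p * j = (p-1)*j + j := by
              have h1 : (p-1)*j = p*j - j := by rw [Nat.sub_mul, one_mul]
              have h2 : j ≤ p * j := Nat.le_mul_of_pos_left j (by omega)
              omega
            have hjlt : j < p := by
              by_contra hcon
              push_neg at hcon
              have : p * p ≤ p * j := Nat.mul_le_mul_left p hcon
              have hpp : p * p = p^2 := (sq p).symm
              omega
            have hEdvd' : (p-1) ∣ ((n+1-k) - 1) := by
              rw [show (n+1-k) - 1 = n - k by omega]; exact hEdvd
            have hjd : (p-1) ∣ (j - 1) := by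
              have hj' : n + 1 - k = (p-1)*j + j := by omega
              have h1 : j - 1 = ((n+1-k) - 1) - (p-1)*j := by omega
              rw [h1]
              exact Nat.dvd_sub hEdvd' ⟨j, rfl⟩
            have hjone : j = 1 := by
              rcases Nat.eq_zero_or_pos (j-1) with h | h
              · omega
              · have := Nat.le_of_dvd h hjd; omega
            rw [hjone, mul_one] at hj
            exact hj
          by_cases hp8 : 8 ≤ p
          · have := quad_norm_le (p := p) (C := n.choose k) (E := n - k) (m := n + 1 - k)
              hB (nat_norm_le_one _) (inv_le_p (by omega) hmlt)
            refine this.trans (pz_le ?_)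
            have : n - k = p - 1 := by omega
            omega
          · have hp7' : p = 7 := by omega
            have hkn6 : k = n - 6 := by omega
            have hCd : p ∣ n.choose k := h7 hp7' hkn6 hk1
            have := quad_norm_le (p := p) (C := n.choose k) (E := n - k) (m := n + 1 - k)
              hB (nat_norm_le_inv hCd) (inv_le_p (by omega) hmlt)
            refine this.trans (pz_le ?_)
            have : n - k = p - 1 := by omega
            omega
        · have := quad_norm_le (p := p) (C := n.choose k) (E := n - k) (m := n + 1 - k)
            hB (nat_norm_le_one _) (my_inv_le_one hpm)
          refine this.trans (pz_le ?_)
          omega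
    · have hB := bern_le' hp7 (le_trans hklen hnle) hnd
      by_cases hpm : p ∣ (n + 1 - k)
      · have hmge : p ≤ n + 1 - k := Nat.le_of_dvd (by omega) hpm
        have := quad_norm_le (p := p) (C := n.choose k) (E := n - k) (m := n + 1 - k)
          hB (nat_norm_le_one _) (inv_le_p (by omega) hmlt)
        refine this.trans (pz_le ?_)
        omega
      · have := quad_norm_le (p := p) (C := n.choose k) (E := n - k) (m := n + 1 - k)
          hB (nat_norm_le_one _) (my_inv_le_one hpm)
        refine this.trans (pz_le ?_)
        omega
theorem modified_power_sum_congruence (p : ℕ) [hp : Fact p.Prime] (hp7 : 7 ≤ p)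
    (d n : ℕ) (hd1 : 1 ≤ d) (hdp : d ≤ p) (hn : n = d * (p - 1))
    (Bh : ℕ → ℚ) (hBh0 : Bh 0 = 0)
    (hBhDvd : ∀ m, 0 < m → (p - 1) ∣ m → Bh m = bernoulli m + 1 / p - 1)
    (hBhNDvd : ∀ m, ¬ (p - 1) ∣ m → Bh m = bernoulli m) :
    ‖(((((∑ j ∈ Finset.Icc 1 (p - 1), (j : ℚ) ^ n) - (p - 1)) / p)
        - (Bh n + (p : ℚ) ^ 2 * (n.choose 3) * Bh (n - 2) / (n - 2)
            + (p : ℚ) ^ 4 * (n.choose 5) * Bh (n - 4) / (n - 4)) : ℚ) : ℚ_[p])‖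
      ≤ (p : ℝ) ^ (-5 : ℤ) := by
  have hp2 : 2 ≤ p := hp.out.two_le
  have hp61 : 6 ≤ p - 1 := by omega
  have hn6 : 6 ≤ n := by
    have h := Nat.le_mul_of_pos_left (p-1) hd1
    omega
  have hnle : n ≤ p * (p-1) := by rw [hn]; exact Nat.mul_le_mul_right _ hdp
  have hdvd : (p-1) ∣ n := ⟨d, by rw [hn, Nat.mul_comm]⟩
  have hnd2 : ¬ (p-1) ∣ (n-2) := by
    intro h
    have h2 : (p-1) ∣ (n - (n-2)) := Nat.dvd_sub hdvd h
    rw [show n - (n-2) = 2 by omega] at h2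
    have := Nat.le_of_dvd (by norm_num) h2; omega
  have hnd4 : ¬ (p-1) ∣ (n-4) := by
    intro h
    have h2 : (p-1) ∣ (n - (n-4)) := Nat.dvd_sub hdvd h
    rw [show n - (n-4) = 4 by omega] at h2
    have := Nat.le_of_dvd (by norm_num) h2; omega
  have hn0 : 0 < n := by omega
  have hBn := hBhDvd n hn0 hdvd
  have hB2 := hBhNDvd (n-2) hnd2
  have hB4 := hBhNDvd (n-4) hnd4
  have hp0 : (p:ℚ) ≠ 0 := Nat.cast_ne_zero.mpr (by omega)
  have hnq6 : (6:ℚ) ≤ (n:ℚ) := by exact_mod_cast hn6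
  set S₀ : ℕ := ∑ j ∈ Finset.range p, j ^ n with hS₀
  have hcast : (S₀ : ℚ) = ∑ j ∈ Finset.range p, (j:ℚ)^n := by rw [hS₀]; push_cast; ring
  have h1 : ∑ j ∈ Finset.Icc 1 (p-1), (j:ℚ)^n = (S₀ : ℚ) := by
    have hIcc : Finset.Icc 1 (p-1) = Finset.Ico 1 p := by
      rw [← Finset.Ico_add_one_right_eq_Icc]; congr 1; omega
    rw [hIcc, hcast, Finset.range_eq_Ico,
      Finset.sum_eq_sum_Ico_succ_bot (by omega : 0 < p) (fun j => (j:ℚ)^n)]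
    simp [zero_pow hn0.ne']
  have h2 : (S₀ : ℚ) = ∑ k ∈ Finset.range (n+1),
      bernoulli k * (((n+1).choose k : ℕ) : ℚ) * (p:ℚ)^(n+1-k) / ((n:ℚ)+1) := by
    rw [hcast]
    exact sum_range_pow p n
  set t : ℕ → ℚ := fun k =>
    bernoulli k * ((n.choose k : ℕ) : ℚ) * (p:ℚ)^(n-k) * (((n+1-k : ℕ)) : ℚ)⁻¹ with htdef
  have htk : ∀ k, t k = bernoulli k * ((n.choose k : ℕ) : ℚ) * (p:ℚ)^(n-k)
      * (((n+1-k : ℕ)) : ℚ)⁻¹ := fun k => rfl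
  have h3 : (S₀ : ℚ)/(p:ℚ) = ∑ k ∈ Finset.range (n+1), t k := by
    rw [h2, Finset.sum_div]
    apply Finset.sum_congr rfl
    intro k hk
    have hkn : k ≤ n := by have := Finset.mem_range.mp hk; omega
    have hg := gterm_eq (N := n) (k := k) hkn (bernoulli k) ((p:ℚ)^(n-k))
    rw [show n+1-k = (n-k)+1 by omega, pow_succ]
    rw [show bernoulli k * (((n+1).choose k : ℕ) : ℚ) * ((p:ℚ)^(n-k) * (p:ℚ)) / ((n:ℚ)+1) / (p:ℚ)
        = bernoulli k * (((n+1).choose k : ℕ) : ℚ) * (p:ℚ)^(n-k) / ((n:ℚ)+1) by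
      field_simp]
    rw [htk, hg]
  have hts : t n = bernoulli n := by
    rw [htk, Nat.choose_self, Nat.sub_self, show n+1-n = 1 by omega]
    norm_num
  have ht2 : t (n-2) = (p:ℚ)^2 * ((n.choose 3 : ℕ):ℚ) * bernoulli (n-2) / ((n:ℚ)-2) := by
    rw [htk, show n - (n-2) = 2 by omega, show n+1-(n-2) = 3 by omega,
      Nat.choose_symm (show (2:ℕ) ≤ n by omega)]
    have hcc : ((n.choose 3 : ℕ):ℚ) * 3 = ((n.choose 2 : ℕ):ℚ) * ((n:ℚ)-2) := by
      have hnat := Nat.choose_succ_right_eq n 2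
      have h' : ((n.choose (2+1) * (2+1) : ℕ) : ℚ) = ((n.choose 2 * (n-2) : ℕ) : ℚ) := by
        exact_mod_cast congrArg (Nat.cast : ℕ → ℚ) hnat
      have h2n : (2:ℕ) ≤ n := by omega
      push_cast [Nat.cast_sub h2n] at h'
      exact_mod_cast h'
    have hn2 : (n:ℚ) - 2 ≠ 0 := by linarith
    field_simp
    linear_combination (-bernoulli (n-2)) * hcc
  have ht4 : t (n-4) = (p:ℚ)^4 * ((n.choose 5 : ℕ):ℚ) * bernoulli (n-4) / ((n:ℚ)-4) := by
    rw [htk, show n - (n-4) = 4 by omega, show n+1-(n-4) = 5 by omega,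
      Nat.choose_symm (show (4:ℕ) ≤ n by omega)]
    have hcc : ((n.choose 5 : ℕ):ℚ) * 5 = ((n.choose 4 : ℕ):ℚ) * ((n:ℚ)-4) := by
      have hnat := Nat.choose_succ_right_eq n 4
      have h' : ((n.choose (4+1) * (4+1) : ℕ) : ℚ) = ((n.choose 4 * (n-4) : ℕ) : ℚ) := by
        exact_mod_cast congrArg (Nat.cast : ℕ → ℚ) hnat
      have h4n : (4:ℕ) ≤ n := by omega
      push_cast [Nat.cast_sub h4n] at h'
      exact_mod_cast h'
    have hn4 : (n:ℚ) - 4 ≠ 0 := by linarith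
    field_simp
    linear_combination (-bernoulli (n-4)) * hcc
  have hev : Even n := by
    have hop : Odd p := hp.out.odd_of_ne_two (by omega)
    obtain ⟨c, hc⟩ := hop
    have : Even (p-1) := ⟨c, by omega⟩
    rw [hn]
    exact this.mul_left d
  have ht1 : t (n-1) = 0 := by
    have ho : Odd (n-1) := Nat.Even.sub_odd (by omega) hev (by norm_num)
    rw [htk, bernoulli_eq_bernoulli'_of_ne_one (by omega), bernoulli'_eq_zero_of_odd ho (by omega)]
    ring
  have ht3 : t (n-3) = 0 := by
    have ho : Odd (n-3) := Nat.Even.sub_odd (by omega) hev ⟨1, rfl⟩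
    rw [htk, bernoulli_eq_bernoulli'_of_ne_one (by omega), bernoulli'_eq_zero_of_odd ho (by omega)]
    ring
  have hsplit : ∑ k ∈ Finset.range (n+1), t k
      = ∑ k ∈ Finset.range (n-4), t k + t (n-4) + t (n-3) + t (n-2) + t (n-1) + t n := by
    rw [show n+1 = (n-4)+1+1+1+1+1 by omega]
    rw [Finset.sum_range_succ, Finset.sum_range_succ, Finset.sum_range_succ,
      Finset.sum_range_succ, Finset.sum_range_succ]
    rw [show n-4+1+1+1+1 = n by omega, show n-4+1+1+1 = n-1 by omega,
      show n-4+1+1 = n-2 by omega, show n-4+1 = n-3 by omega]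
  have hdivp : ((S₀:ℚ) - ((p:ℚ)-1))/(p:ℚ) = ∑ k ∈ Finset.range (n+1), t k - 1 + 1/(p:ℚ) := by
    rw [← h3]
    field_simp
    ring
  have hmain : ((∑ j ∈ Finset.Icc 1 (p - 1), (j : ℚ) ^ n) - ((p:ℚ) - 1)) / (p:ℚ)
        - (Bh n + (p : ℚ) ^ 2 * (n.choose 3) * Bh (n - 2) / ((n:ℚ) - 2)
            + (p : ℚ) ^ 4 * (n.choose 5) * Bh (n - 4) / ((n:ℚ) - 4))
      = ∑ k ∈ Finset.range (n-4), t k := by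
    rw [h1, hBn, hB2, hB4, hdivp, hsplit, ht1, ht3, hts, ht2, ht4]
    ring
  rw [hmain]
  rw [Rat.cast_sum]
  apply IsUltrametricDist.norm_sum_le_of_forall_le_of_nonneg (by positivity)
  intro k hk
  have hk5 : k ≤ n - 5 := by have := Finset.mem_range.mp hk; omega
  have h7 : p = 7 → k = n - 6 → 1 ≤ k → p ∣ n.choose k := by
    intro hp7' hkeq hk1
    subst hkeq
    subst hp7'
    have hd2 : 2 ≤ d := by
      by_contra hcon
      have : d = 1 := by omega
      rw [this, one_mul] at hn
      omega
    rw [hn]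
    interval_cases d <;> decide
  rw [htk]
  exact main_term_le hp7 hn6 hnle hdvd hk5 h7
end

section
/- Let p ≥ 5 be a prime, n a positive even integer with (p-1) ∤ n and n > r, where r ≥ 1. Then the r-th forward difference with step p-1 of the divided Bernoulli numbers satisfies ∑_{ν=0}^{r} C(r,ν)(-1)^{r-ν} B_{n+ν(p-1)}/(n+ν(p-1)) ≡ 0 (mod p^r) in the p-adic integers. -/
open Finset

variable {p : ℕ} [hp : Fact p.Prime]

lemma pnorm_sum_le {ι : Type*} (s : Finset ι) (f : ι → ℚ_[p]) {C : ℝ} (hC : 0 ≤ C)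
    (h : ∀ i ∈ s, ‖f i‖ ≤ C) : ‖∑ i ∈ s, f i‖ ≤ C := by
  induction s using Finset.cons_induction with
  | empty => simpa using hC
  | cons a s ha ih =>
    rw [Finset.sum_cons]
    exact le_trans (Padic.nonarchimedean _ _)
      (max_le (h a (Finset.mem_cons_self _ _)) (ih fun i hi => h i (Finset.mem_cons_of_mem hi)))

lemma pnorm_nat_le_one (a : ℕ) : ‖(a : ℚ_[p])‖ ≤ 1 := by
  simpa using Padic.norm_int_le_one (p := p) (a : ℤ)

-- v_p(m) ≤ m crude: ‖(m:ℚ_p)‖ ≥ p^(-m)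
lemma pnorm_nat_inv_le (m : ℕ) (hm : 1 ≤ m) : ‖((m : ℚ_[p]))⁻¹‖ ≤ (p : ℝ) ^ (m : ℤ) := by
  have hp1 : (1:ℝ) < p := by exact_mod_cast hp.out.one_lt
  have hnd : ¬ ((p:ℤ)^m ∣ (m:ℤ)) := by
    intro h
    have h2 : (p:ℤ)^m ≤ m := Int.le_of_dvd (by exact_mod_cast hm) h
    have h3 : (m:ℤ) < 2^m := by exact_mod_cast (Nat.lt_two_pow_self (n := m))
    have h4 : (2:ℤ)^m ≤ (p:ℤ)^m := pow_le_pow_left₀ (by norm_num) (by exact_mod_cast hp.out.two_le) m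
    omega
  have := (Padic.norm_int_le_pow_iff_dvd (p := p) (m : ℤ) m).not.mpr hnd
  push_cast at this
  have hlt : (p:ℝ) ^ (-(m:ℤ)) < ‖(m : ℚ_[p])‖ := lt_of_not_ge this
  have h0 : (0:ℝ) < ‖(m : ℚ_[p])‖ := lt_trans (by positivity) hlt
  rw [norm_inv]
  rw [inv_le_comm₀ h0 (by positivity)]
  rw [← zpow_neg]
  exact le_of_lt hlt

lemma pnorm_one_le_pow (k : ℕ) : (1:ℝ) ≤ (p:ℝ) ^ (k : ℤ) :=
  one_le_zpow₀ (by exact_mod_cast hp.out.one_le) (by positivity)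

lemma pnorm_sub_le_max (a b : ℚ_[p]) : ‖a - b‖ ≤ max ‖a‖ ‖b‖ := by
  rw [sub_eq_add_neg]
  simpa using Padic.nonarchimedean a (-b)

lemma pnorm_bernoulli'_le : ∀ n : ℕ, ‖((bernoulli' n : ℚ) : ℚ_[p])‖ ≤ (p:ℝ) ^ (((n+1)^2 : ℕ) : ℤ) := by
  intro n
  induction n using Nat.strong_induction_on with
  | _ n ih =>
  have hp1 : (1:ℝ) ≤ (p:ℝ) := by exact_mod_cast hp.out.one_le
  rw [bernoulli'_def]
  push_cast
  refine le_trans (pnorm_sub_le_max _ _) (max_le ?_ ?_)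
  · simpa using (by exact_mod_cast pnorm_one_le_pow (p := p) ((n+1)^2) : (1:ℝ) ≤ (p:ℝ) ^ (((n:ℤ)+1)^2))
  · refine pnorm_sum_le _ _ (by positivity) ?_
    intro k hk
    rw [Finset.mem_range] at hk
    have hterm : ‖((n.choose k : ℚ_[p]) / ((n:ℚ_[p]) - k + 1) * ((bernoulli' k : ℚ) : ℚ_[p]))‖
        ≤ 1 * (p:ℝ) ^ ((n+1 : ℕ) : ℤ) * (p:ℝ) ^ ((n^2 : ℕ) : ℤ) := by
      rw [norm_mul, norm_div]
      have h1 : ‖(n.choose k : ℚ_[p])‖ ≤ 1 := pnorm_nat_le_one _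
      have h2 : ‖((n:ℚ_[p]) - k + 1)‖⁻¹ ≤ (p:ℝ) ^ ((n+1 : ℕ) : ℤ) := by
        have he : ((n:ℚ_[p]) - k + 1) = ((n - k + 1 : ℕ) : ℚ_[p]) := by
          push_cast [Nat.cast_sub hk.le]; ring
        rw [he, ← norm_inv]
        refine le_trans (pnorm_nat_inv_le _ (by omega)) ?_
        exact zpow_le_zpow_right₀ hp1 (by exact_mod_cast (by omega : n - k + 1 ≤ n + 1))
      have h3 : ‖((bernoulli' k : ℚ) : ℚ_[p])‖ ≤ (p:ℝ) ^ ((n^2 : ℕ) : ℤ) := by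
        refine le_trans (ih k hk) (zpow_le_zpow_right₀ hp1 ?_)
        exact_mod_cast Nat.pow_le_pow_left (by omega) 2
      rw [div_eq_mul_inv]
      gcongr
      all_goals first | assumption | positivity
    refine le_trans hterm ?_
    rw [one_mul, ← zpow_add₀ (by positivity)]
    exact zpow_le_zpow_right₀ hp1 (by push_cast; nlinarith)

lemma pnorm_bernoulli_le (n : ℕ) : ‖((bernoulli n : ℚ) : ℚ_[p])‖ ≤ (p:ℝ) ^ (((n+1)^2 : ℕ) : ℤ) := by
  rw [bernoulli]
  push_cast
  rw [norm_mul]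
  have : ‖((-1 : ℚ_[p]))^n‖ = 1 := by
    rw [norm_pow, norm_neg, norm_one, one_pow]
  rw [this, one_mul]
  exact pnorm_bernoulli'_le n

-- (x+y)^(m+1) ≡ x^(m+1) + (m+1) x^m y  mod y^2
lemma binom_cong (x y : ℤ) : ∀ m : ℕ, (y^2 : ℤ) ∣ ((x + y)^(m+1) - (x^(m+1) + (m+1) * x^m * y)) := by
  intro m
  induction m with
  | zero => simp
  | succ m ih =>
    obtain ⟨k, hk⟩ := ih
    refine ⟨(x + y) * k + (m+1) * x^m, ?_⟩
    have hxy : (x + y)^(m+1) = x^(m+1) + (m+1) * x^m * y + y^2 * k := by linarith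
    calc (x + y)^(m+2) - (x^(m+2) + (m+2) * x^(m+1) * y)
        = (x+y) * ((x + y)^(m+1)) - (x^(m+2) + (m+2) * x^(m+1) * y) := by ring
      _ = (x+y) * (x^(m+1) + (m+1) * x^m * y + y^2 * k) - (x^(m+2) + (m+2) * x^(m+1) * y) := by rw [hxy]
      _ = y^2 * ((x + y) * k + (m+1) * x^m) := by push_cast; ring

-- permutation of residues
lemma perm_sum {M : Type*} [AddCommMonoid M] (N a : ℕ) (hN : 1 < N) (h : Nat.Coprime a N)
    (f : ℕ → M) : ∑ j ∈ range N, f ((a * j) % N) = ∑ j ∈ range N, f j := by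
  obtain ⟨b, -, hb⟩ := Nat.exists_mul_mod_eq_one_of_coprime h hN
  refine Finset.sum_nbij' (fun j => (a * j) % N) (fun j => (b * j) % N) ?_ ?_ ?_ ?_ ?_
  · intro j hj; exact Finset.mem_range.mpr (Nat.mod_lt _ (by omega))
  · intro j hj; exact Finset.mem_range.mpr (Nat.mod_lt _ (by omega))
  · intro j hj
    rw [Finset.mem_range] at hj
    show b * (a * j % N) % N = j
    rw [Nat.mul_mod_mod, show b * (a * j) = a * b * j by ring, ← Nat.mod_mul_mod, hb, one_mul,
      Nat.mod_eq_of_lt hj]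
  · intro j hj
    rw [Finset.mem_range] at hj
    show a * (b * j % N) % N = j
    rw [Nat.mul_mod_mod, show a * (b * j) = a * b * j by ring, ← Nat.mod_mul_mod, hb, one_mul,
      Nat.mod_eq_of_lt hj]
  · intro j hj; rfl

lemma voronoi_int (m N a : ℕ) (hm : 1 ≤ m) (hN : 1 < N) (h : Nat.Coprime a N) :
    ((N:ℤ)^2) ∣ (((a:ℤ)^m - 1) * (∑ j ∈ range N, (j:ℤ)^m)
      - ((m:ℤ) * (a:ℤ)^(m-1) * (N:ℤ) * ∑ j ∈ range N, (j:ℤ)^(m-1) * (((a*j)/N : ℕ) : ℤ))) := by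
  have key : ((N:ℤ)^2) ∣ ∑ j ∈ range N, (((((a*j) % N : ℕ)) : ℤ)^m
      - ((a:ℤ)^m * (j:ℤ)^m - (m:ℤ) * (a:ℤ)^(m-1) * ((j:ℤ)^(m-1) * ((N:ℤ) * (((a*j)/N : ℕ) : ℤ))))) := by
    refine Finset.dvd_sum ?_
    intro j hj
    obtain ⟨m', rfl⟩ : ∃ m', m = m' + 1 := ⟨m - 1, by omega⟩
    have hsplit : ((((a*j) % N : ℕ)) : ℤ) = (a:ℤ) * j + (-((N:ℤ) * (((a*j)/N : ℕ) : ℤ))) := by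
      have h0 : N * (a*j/N) + a*j % N = a*j := Nat.div_add_mod (a*j) N
      have h0' : ((N:ℤ)) * (((a*j)/N : ℕ) : ℤ) + (((a*j) % N : ℕ) : ℤ) = (a:ℤ) * (j:ℤ) := by
        exact_mod_cast congrArg (fun t : ℕ => (t : ℤ)) h0
      linarith [h0']
    obtain ⟨k, hk⟩ := binom_cong ((a:ℤ)*j) (-((N:ℤ) * (((a*j)/N : ℕ) : ℤ))) m'
    refine ⟨(((a*j)/N : ℕ) : ℤ)^2 * k, ?_⟩
    rw [hsplit]
    simp only [Nat.add_sub_cancel]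
    push_cast at hk ⊢
    linear_combination hk
  obtain ⟨K, hK⟩ := key
  refine ⟨-K, ?_⟩
  have hperm := perm_sum N a hN h (fun t => ((t : ℤ))^m)
  rw [Finset.sum_sub_distrib, hperm] at hK
  have expand : ∑ j ∈ range N, ((a:ℤ)^m * (j:ℤ)^m
      - (m:ℤ) * (a:ℤ)^(m-1) * ((j:ℤ)^(m-1) * ((N:ℤ) * (((a*j)/N : ℕ) : ℤ))))
      = (a:ℤ)^m * (∑ j ∈ range N, (j:ℤ)^m)
        - (m:ℤ) * (a:ℤ)^(m-1) * (N:ℤ) * ∑ j ∈ range N, (j:ℤ)^(m-1) * (((a*j)/N : ℕ) : ℤ) := by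
    rw [Finset.sum_sub_distrib, ← Finset.mul_sum, Finset.mul_sum, Finset.mul_sum]
    congr 1
    exact Finset.sum_congr rfl (fun j hj => by ring)
  rw [expand] at hK
  linarith [hK]

set_option maxHeartbeats 1000000 in
lemma voronoi_padic (m M a : ℕ) (hm : 1 ≤ m) (hM : 1 ≤ M) (ha : ¬ p ∣ a) :
    ‖((a:ℚ_[p])^m - 1) * (((bernoulli m : ℚ) : ℚ_[p]) / m)
      - (a:ℚ_[p])^(m-1) * (∑ j ∈ range (p^M), (j:ℚ_[p])^(m-1) * (((a*j)/(p^M) : ℕ) : ℚ_[p]))‖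
      ≤ (p:ℝ) ^ ((((m+1)^2 + 3*m + 2 : ℕ) : ℤ) - (M:ℤ)) := by
  have hp1 : (1:ℝ) ≤ (p:ℝ) := by exact_mod_cast hp.out.one_le
  have hppos : (0:ℝ) < (p:ℝ) := by exact_mod_cast hp.out.pos
  set N : ℕ := p^M with hNdef
  have hN1 : 1 < N := Nat.one_lt_pow (by omega) hp.out.one_lt
  have hcop : Nat.Coprime a N := ((Nat.Prime.coprime_iff_not_dvd hp.out).mpr ha).symm.pow_right M
  obtain ⟨z, hz⟩ := voronoi_int m N a hm hN1 hcop
  -- cast the integer congruence to ℚ_[p]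
  set A : ℚ_[p] := (a : ℚ_[p]) with hAdef
  set Φ : ℚ_[p] := ∑ j ∈ range N, (j:ℚ_[p])^(m-1) * (((a*j)/N : ℕ) : ℚ_[p]) with hΦdef
  have hzQ : (A^m - 1) * (∑ j ∈ range N, (j:ℚ_[p])^m)
      - ((m:ℚ_[p]) * A^(m-1) * (N:ℚ_[p]) * Φ) = ((N:ℚ_[p]))^2 * (z : ℚ_[p]) := by
    have := congrArg (fun t : ℤ => (t : ℚ_[p])) hz
    push_cast [-Int.natCast_ediv] at this
    simpa [hΦdef, hAdef, -Int.natCast_ediv] using this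
  -- Bernoulli formula for the power sum
  have hS : (∑ j ∈ range N, (j:ℚ_[p])^m)
      = ∑ i ∈ range (m+1), ((bernoulli i : ℚ) : ℚ_[p]) * (((m+1).choose i : ℕ) : ℚ_[p])
          * (N:ℚ_[p])^(m+1-i) / ((m+1 : ℕ) : ℚ_[p]) := by
    have := congrArg (fun t : ℚ => (t : ℚ_[p])) (_root_.sum_range_pow N m)
    push_cast at this
    convert this using 2 <;> norm_num
  set β : ℚ_[p] := ((bernoulli m : ℚ) : ℚ_[p]) with hβdef
  set T : ℚ_[p] := ∑ i ∈ range m, ((bernoulli i : ℚ) : ℚ_[p]) * (((m+1).choose i : ℕ) : ℚ_[p])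
          * (N:ℚ_[p])^(m-i) / ((m+1 : ℕ) : ℚ_[p]) with hTdef
  have hm1ne : ((m+1 : ℕ) : ℚ_[p]) ≠ 0 := Nat.cast_ne_zero.mpr (by omega)
  have hS2 : (∑ j ∈ range N, (j:ℚ_[p])^m) = (N:ℚ_[p]) * (β + T) := by
    rw [hS, Finset.sum_range_succ]
    have htop : ((bernoulli m : ℚ) : ℚ_[p]) * (((m+1).choose m : ℕ) : ℚ_[p])
        * (N:ℚ_[p])^(m+1-m) / ((m+1 : ℕ) : ℚ_[p]) = (N:ℚ_[p]) * β := by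
      rw [Nat.choose_succ_self_right, Nat.add_sub_cancel_left, pow_one, mul_right_comm,
        mul_div_assoc, div_self hm1ne, mul_one, mul_comm]
    rw [htop]
    have hsum : ∑ i ∈ range m, ((bernoulli i : ℚ) : ℚ_[p]) * (((m+1).choose i : ℕ) : ℚ_[p])
        * (N:ℚ_[p])^(m+1-i) / ((m+1 : ℕ) : ℚ_[p]) = (N:ℚ_[p]) * T := by
      rw [hTdef, Finset.mul_sum]
      refine Finset.sum_congr rfl (fun i hi => ?_)
      rw [Finset.mem_range] at hi
      have hmi : m + 1 - i = (m - i) + 1 := by omega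
      rw [hmi, pow_succ]
      ring
    rw [hsum]
    ring
  have hN0 : (N:ℚ_[p]) ≠ 0 := by
    rw [hNdef]
    push_cast
    exact pow_ne_zero _ (Nat.cast_ne_zero.mpr hp.out.ne_zero)
  have hm0 : ((m:ℚ_[p])) ≠ 0 := Nat.cast_ne_zero.mpr (by omega)
  have h3 : (A^m - 1) * (β + T) = (m:ℚ_[p]) * A^(m-1) * Φ + (N:ℚ_[p]) * z := by
    apply mul_left_cancel₀ hN0
    rw [hS2] at hzQ
    linear_combination hzQ
  have h4 : (A^m - 1) * β = (m:ℚ_[p]) * A^(m-1) * Φ + (N:ℚ_[p]) * z - (A^m - 1) * T := by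
    linear_combination h3
  have key : (A^m - 1) * (β / m) - A^(m-1) * Φ
      = (N:ℚ_[p]) * z / m - (A^m - 1) * T / m := by
    rw [mul_div_assoc', h4]
    field_simp
    ring
  rw [key]
  -- norm bounds
  have hnormN : ‖(N:ℚ_[p])‖ = (p:ℝ) ^ (-(M:ℤ)) := by
    rw [hNdef]; push_cast; exact_mod_cast Padic.norm_p_pow M
  have hA1 : ‖A^m - 1‖ ≤ 1 := by
    refine le_trans (pnorm_sub_le_max _ _) (max_le ?_ (by norm_num))
    rw [norm_pow]
    exact pow_le_one₀ (norm_nonneg _) (pnorm_nat_le_one a)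
  have hinvm : ‖((m:ℚ_[p]))⁻¹‖ ≤ (p:ℝ)^(m:ℤ) := pnorm_nat_inv_le m hm
  refine le_trans (pnorm_sub_le_max _ _) (max_le ?_ ?_)
  · -- ‖N z / m‖
    rw [div_eq_mul_inv, norm_mul, norm_mul, hnormN]
    have hz1 : ‖(z : ℚ_[p])‖ ≤ 1 := Padic.norm_int_le_one z
    calc (p:ℝ)^(-(M:ℤ)) * ‖(z:ℚ_[p])‖ * ‖((m:ℚ_[p]))⁻¹‖
        ≤ (p:ℝ)^(-(M:ℤ)) * 1 * (p:ℝ)^(m:ℤ) := by gcongr <;> positivity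
      _ = (p:ℝ)^(((m:ℤ)) - (M:ℤ)) := by
          rw [mul_one, ← zpow_add₀ (ne_of_gt hppos)]; ring_nf
      _ ≤ _ := zpow_le_zpow_right₀ hp1 (by push_cast; nlinarith)
  · -- ‖(A^m - 1) * T / m‖
    rw [div_eq_mul_inv, norm_mul, norm_mul]
    have hT : ‖T‖ ≤ (p:ℝ) ^ ((((m^2 + m + 1 : ℕ)) : ℤ) - (M:ℤ)) := by
      rw [hTdef]
      refine pnorm_sum_le _ _ (by positivity) ?_
      intro i hi
      rw [Finset.mem_range] at hi
      rw [div_eq_mul_inv, norm_mul, norm_mul, norm_mul]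
      have h5 : ‖((bernoulli i : ℚ) : ℚ_[p])‖ ≤ (p:ℝ)^(((i+1)^2 : ℕ):ℤ) := pnorm_bernoulli_le i
      have h6 : ‖(((m+1).choose i : ℕ) : ℚ_[p])‖ ≤ 1 := pnorm_nat_le_one _
      have h7 : ‖(N:ℚ_[p])^(m-i)‖ ≤ (p:ℝ)^(-(M:ℤ)) := by
        rw [norm_pow, hnormN, ← zpow_natCast ((p:ℝ)^(-(M:ℤ))) (m-i), ← zpow_mul]
        refine zpow_le_zpow_right₀ hp1 ?_
        have : 1 ≤ m - i := by omega
        have hMi : (M:ℤ) ≤ (M:ℤ) * (m - i : ℕ) := le_mul_of_one_le_right (by positivity) (by exact_mod_cast this)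
        linarith [hMi]
      have h8 : ‖(((m+1 : ℕ) : ℚ_[p]))⁻¹‖ ≤ (p:ℝ)^((m+1 : ℕ):ℤ) := pnorm_nat_inv_le (m+1) (by omega)
      calc ‖((bernoulli i : ℚ) : ℚ_[p])‖ * ‖(((m+1).choose i : ℕ) : ℚ_[p])‖ * ‖(N:ℚ_[p])^(m-i)‖ * ‖(((m+1 : ℕ) : ℚ_[p]))⁻¹‖
          ≤ (p:ℝ)^(((i+1)^2 : ℕ):ℤ) * 1 * (p:ℝ)^(-(M:ℤ)) * (p:ℝ)^((m+1 : ℕ):ℤ) := by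
            gcongr <;> positivity
        _ = (p:ℝ)^((((i+1)^2 : ℕ):ℤ) + (-(M:ℤ)) + ((m+1 : ℕ):ℤ)) := by
            rw [mul_one, ← zpow_add₀ (ne_of_gt hppos), ← zpow_add₀ (ne_of_gt hppos)]
        _ ≤ _ := by
            refine zpow_le_zpow_right₀ hp1 ?_
            push_cast
            nlinarith [hi]
    calc ‖A^m - 1‖ * ‖T‖ * ‖((m:ℚ_[p]))⁻¹‖
        ≤ 1 * ((p:ℝ) ^ ((((m^2 + m + 1 : ℕ)) : ℤ) - (M:ℤ))) * (p:ℝ)^(m:ℤ) := by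
          gcongr <;> positivity
      _ = (p:ℝ) ^ (((((m^2 + m + 1 : ℕ)) : ℤ) - (M:ℤ)) + (m:ℤ)) := by
          rw [one_mul, ← zpow_add₀ (ne_of_gt hppos)]
      _ ≤ _ := by
          refine zpow_le_zpow_right₀ hp1 ?_
          push_cast
          nlinarith

set_option maxHeartbeats 2000000 in
theorem generalized_kummer_congruence (p : ℕ) [hp : Fact p.Prime] (hp5 : 5 ≤ p)
    (n r : ℕ) (hn0 : 0 < n) (hne : Even n) (hnd : ¬ (p - 1) ∣ n)
    (hr : 1 ≤ r) (hnr : n > r) :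
    ‖((∑ ν ∈ Finset.range (r + 1),
        (r.choose ν : ℚ) * (-1) ^ (r - ν) *
          (bernoulli (n + ν * (p - 1)) / (n + ν * (p - 1)) : ℚ) : ℚ) : ℚ_[p])‖
      ≤ (p : ℝ) ^ (-(r : ℤ)) := by
  have hp2 : 2 ≤ p := hp.out.two_le
  have hp1R : (1:ℝ) ≤ (p:ℝ) := by exact_mod_cast hp.out.one_le
  have hppos : (0:ℝ) < (p:ℝ) := by exact_mod_cast hp.out.pos
  -- primitive root mod p
  obtain ⟨ζ, hζ⟩ := IsCyclic.exists_generator (α := (ZMod p)ˣ)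
  set g : ℕ := (ζ : ZMod p).val with hgdef
  have hgcast : ((g : ℕ) : ZMod p) = (ζ : ZMod p) := by simp [hgdef, ZMod.natCast_val]
  have horder : orderOf ζ = p - 1 := by
    rw [orderOf_eq_card_of_forall_mem_zpowers hζ, Nat.card_eq_fintype_card, ZMod.card_units]
  have hgp : ¬ p ∣ g := by
    intro hd
    have h0 : ((g:ℕ) : ZMod p) = 0 := (ZMod.natCast_eq_zero_iff g p).mpr hd
    rw [hgcast] at h0
    exact ζ.ne_zero h0
  have hgpow : ∀ s : ℕ, ¬ (p-1) ∣ s → ¬ ((p:ℤ) ∣ ((g:ℤ)^s - 1)) := by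
    intro s hs hdvd
    have h0 : (((g:ℤ)^s - 1 : ℤ) : ZMod p) = 0 := (ZMod.intCast_zmod_eq_zero_iff_dvd _ p).mpr hdvd
    push_cast at h0
    rw [sub_eq_zero] at h0
    rw [hgcast] at h0
    have hζs : ζ^s = 1 := Units.val_eq_one.mp (by push_cast; exact h0)
    exact hs (horder ▸ orderOf_dvd_of_pow_eq_one hζs)
  -- parameters
  set mb : ℕ := n + r*(p-1) with hmbdef
  set M : ℕ := (mb+1)^2 + 3*mb + 2 + (mb+1)^2 + mb + r with hMdef
  have hM1 : 1 ≤ M := by omega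
  set N : ℕ := p^M with hNdef
  set a : ℕ := g^(p^(M-1)) with hadef
  have hap : ¬ p ∣ a := fun hd => hgp (hp.out.dvd_of_dvd_pow hd)
  have hcop1 : Nat.Coprime (p-1) (p^(M-1)) := by
    have h1 : Nat.Coprime (p-1) p := by
      have : p - 1 + 1 = p := by omega
      rw [← this]; simp
    exact h1.pow_right _
  have hapow : ∀ s : ℕ, ¬ (p-1) ∣ s → ¬ ((p:ℤ) ∣ ((a:ℤ)^s - 1)) := by
    intro s hs hdvd
    have he : (a:ℤ)^s = (g:ℤ)^(p^(M-1) * s) := by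
      rw [hadef]; push_cast; rw [← pow_mul]
    rw [he] at hdvd
    refine hgpow _ ?_ hdvd
    intro hdvd'
    exact hs (hcop1.dvd_of_dvd_mul_left hdvd')
  have haeuler : ((p:ℤ)^M) ∣ ((a:ℤ)^(p-1) - 1) := by
    have hcopg : Nat.Coprime g (p^M) :=
      (((Nat.Prime.coprime_iff_not_dvd hp.out).mpr hgp).symm).pow_right M
    have heul := Nat.ModEq.pow_totient hcopg
    have hφ : Nat.totient (p^M) = p^(M-1)*(p-1) := Nat.totient_prime_pow hp.out (by omega)
    have h2 : a^(p-1) ≡ 1 [MOD p^M] := by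
      rw [hadef, ← pow_mul, ← hφ]; exact heul
    have h3 := (h2.symm).dvd
    push_cast at h3 ⊢
    exact h3
  -- p-adic setup
  set A : ℚ_[p] := (a:ℚ_[p]) with hAdef
  have hAnorm : ‖A‖ = 1 := by
    refine le_antisymm (pnorm_nat_le_one a) ?_
    have h1 := (Padic.norm_intCast_lt_one_iff (p := p) (k := (a:ℤ))).not.mpr (by exact_mod_cast hap)
    have h2 : ((a : ℤ) : ℚ_[p]) = A := by push_cast; rfl
    rw [h2] at h1
    exact le_of_not_gt h1
  have hA0 : A ≠ 0 := by
    intro h; rw [h, norm_zero] at hAnorm; norm_num at hAnorm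
  set w : ℚ_[p] := A⁻¹ with hwdef
  have hwnorm : ‖w‖ = 1 := by rw [hwdef, norm_inv, hAnorm, inv_one]
  have hwA : w * A = 1 := inv_mul_cancel₀ hA0
  -- the sequences
  set mm : ℕ → ℕ := fun ν => n + ν*(p-1) with hmmdef
  set b : ℕ → ℚ_[p] := fun ν => ((bernoulli (mm ν) : ℚ) : ℚ_[p]) / ((mm ν : ℕ) : ℚ_[p]) with hbdef
  set Φf : ℕ → ℚ_[p] :=
    fun ν => ∑ j ∈ range N, (j:ℚ_[p])^(mm ν - 1) * (((a*j)/N : ℕ) : ℚ_[p]) with hΦfdef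
  set c : ℕ → ℚ_[p] := fun ν => ((r.choose ν : ℕ) : ℚ_[p]) * (-1)^(r-ν) with hcdef
  have hcnorm : ∀ ν, ‖c ν‖ ≤ 1 := by
    intro ν
    rw [hcdef]
    simp only [norm_mul, norm_pow, norm_neg, norm_one, one_pow, mul_one]
    exact pnorm_nat_le_one _
  have hmm1 : ∀ ν, 1 ≤ mm ν := fun ν => by simp [hmmdef]; omega
  have hmmle : ∀ ν ∈ range (r+1), mm ν ≤ mb := by
    intro ν hν
    rw [Finset.mem_range] at hν
    simp only [hmmdef, hmbdef]
    have : ν * (p-1) ≤ r * (p-1) := Nat.mul_le_mul_right _ (by omega)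
    omega
  -- norm of b
  have hbnorm : ∀ ν ∈ range (r+1), ‖b ν‖ ≤ (p:ℝ) ^ ((((mb+1)^2 + mb : ℕ) : ℤ)) := by
    intro ν hν
    rw [hbdef]
    simp only [div_eq_mul_inv, norm_mul]
    calc ‖((bernoulli (mm ν) : ℚ) : ℚ_[p])‖ * ‖(((mm ν : ℕ) : ℚ_[p]))⁻¹‖
        ≤ (p:ℝ)^(((mm ν + 1)^2 : ℕ) : ℤ) * (p:ℝ)^((mm ν : ℕ) : ℤ) :=
          mul_le_mul (pnorm_bernoulli_le _) (pnorm_nat_inv_le _ (hmm1 ν)) (norm_nonneg _)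
            (by positivity)
      _ = (p:ℝ)^((((mm ν + 1)^2 : ℕ) : ℤ) + ((mm ν : ℕ) : ℤ)) := by
          rw [← zpow_add₀ (ne_of_gt hppos)]
      _ ≤ _ := by
          refine zpow_le_zpow_right₀ hp1R ?_
          have h1 := hmmle ν hν
          push_cast
          nlinarith
  -- d = w^(p-1), close to 1
  set d : ℚ_[p] := w^(p-1) with hddef
  have hdnorm : ‖d‖ = 1 := by rw [hddef, norm_pow, hwnorm, one_pow]
  have hd1 : ‖d - 1‖ ≤ (p:ℝ)^(-(M:ℤ)) := by
    have hA1 : ‖A^(p-1) - 1‖ ≤ (p:ℝ)^(-(M:ℤ)) := by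
      have he : ((( (a:ℤ)^(p-1) - 1 : ℤ)) : ℚ_[p]) = A^(p-1) - 1 := by push_cast; rfl
      rw [← he]
      exact (Padic.norm_int_le_pow_iff_dvd _ M).mpr haeuler
    have hAd : A^(p-1) * d = 1 := by
      rw [hddef, hwdef, inv_pow, mul_inv_cancel₀ (pow_ne_zero _ hA0)]
    have he2 : d - 1 = (1 - A^(p-1)) * d := by
      linear_combination hAd
    rw [he2, norm_mul, hdnorm, mul_one, norm_sub_rev]
    exact hA1
  have hdpow : ∀ ν, ‖d^ν - 1‖ ≤ (p:ℝ)^(-(M:ℤ)) := by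
    intro ν
    have he : d^ν - 1 = (∑ i ∈ range ν, d^i) * (d - 1) := (geom_sum_mul d ν).symm
    rw [he, norm_mul]
    have h1 : ‖∑ i ∈ range ν, d^i‖ ≤ 1 := by
      refine pnorm_sum_le _ _ (by norm_num) ?_
      intro i hi
      rw [norm_pow, hdnorm, one_pow]
    calc ‖∑ i ∈ range ν, d^i‖ * ‖d - 1‖ ≤ 1 * ((p:ℝ)^(-(M:ℤ))) := by
          exact mul_le_mul h1 hd1 (norm_nonneg _) (by norm_num)
      _ = (p:ℝ)^(-(M:ℤ)) := one_mul _
  -- main per-ν estimate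
  have hstep : ∀ ν ∈ range (r+1),
      ‖(A - w^(n-1)) * b ν - Φf ν‖ ≤ (p:ℝ)^(-(r:ℤ)) := by
    intro ν hν
    have hv := voronoi_padic (p := p) (mm ν) M a (hmm1 ν) hM1 hap
    -- identities
    have hwApow : ∀ k : ℕ, w^k * A^k = 1 := by
      intro k; rw [← mul_pow, hwA, one_pow]
    have hmm1' : mm ν - 1 + 1 = mm ν := by have := hmm1 ν; omega
    have hpow : w^(mm ν - 1) * A^(mm ν) = A := by
      calc w^(mm ν - 1) * A^(mm ν) = w^(mm ν - 1) * (A^(mm ν - 1) * A) := by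
            rw [← pow_succ, hmm1']
        _ = (w^(mm ν - 1) * A^(mm ν - 1)) * A := by ring
        _ = A := by rw [hwApow, one_mul]
    have h1 : (A - w^(mm ν - 1)) * b ν - Φf ν
        = w^(mm ν - 1) * ((A^(mm ν) - 1) * b ν - A^(mm ν - 1) * Φf ν) := by
      have h2 := hwApow (mm ν - 1)
      linear_combination (-(b ν)) * hpow + (Φf ν) * h2
    have hnorm1 : ‖(A - w^(mm ν - 1)) * b ν - Φf ν‖ ≤ (p:ℝ)^(-((r:ℤ)+1)) := by
      rw [h1, norm_mul, norm_pow, hwnorm, one_pow, one_mul]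
      refine le_trans hv ?_
      refine zpow_le_zpow_right₀ hp1R ?_
      have h3 := hmmle ν hν
      rw [hMdef]
      push_cast
      nlinarith
    -- replace w^(mm ν - 1) by w^(n-1)
    have hsplit : (A - w^(n-1)) * b ν - Φf ν
        = ((A - w^(mm ν - 1)) * b ν - Φf ν) + (w^(mm ν - 1) - w^(n-1)) * b ν := by ring
    have hwdiff : ‖w^(mm ν - 1) - w^(n-1)‖ ≤ (p:ℝ)^(-(M:ℤ)) := by
      have he : mm ν - 1 = (n-1) + (p-1)*ν := by
        simp only [hmmdef]; rw [mul_comm (p-1) ν]; omega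
      have he2 : w^(mm ν - 1) = w^(n-1) * d^ν := by
        rw [he, pow_add, hddef, ← pow_mul]
      rw [he2, show w^(n-1) * d^ν - w^(n-1) = w^(n-1) * (d^ν - 1) by ring, norm_mul,
        norm_pow, hwnorm, one_pow, one_mul]
      exact hdpow ν
    rw [hsplit]
    refine le_trans (Padic.nonarchimedean _ _) (max_le ?_ ?_)
    · refine le_trans hnorm1 (zpow_le_zpow_right₀ hp1R (by omega))
    · rw [norm_mul]
      calc ‖w^(mm ν - 1) - w^(n-1)‖ * ‖b ν‖
          ≤ (p:ℝ)^(-(M:ℤ)) * (p:ℝ)^((((mb+1)^2 + mb : ℕ) : ℤ)) :=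
            mul_le_mul hwdiff (hbnorm ν hν) (norm_nonneg _) (by positivity)
        _ = (p:ℝ)^((-(M:ℤ)) + (((mb+1)^2 + mb : ℕ) : ℤ)) := by
            rw [← zpow_add₀ (ne_of_gt hppos)]
        _ ≤ _ := by
            refine zpow_le_zpow_right₀ hp1R ?_
            rw [hMdef]
            push_cast
            nlinarith
  -- bound on the Φ-sum
  have hΦsum : ‖∑ ν ∈ range (r+1), c ν * Φf ν‖ ≤ (p:ℝ)^(-(r:ℤ)) := by
    have hswap : ∑ ν ∈ range (r+1), c ν * Φf ν
        = ∑ j ∈ range N, ((j:ℚ_[p])^(n-1) * ((j:ℚ_[p])^(p-1) - 1)^r)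
            * (((a*j)/N : ℕ) : ℚ_[p]) := by
      simp only [hΦfdef]
      rw [show (∑ ν ∈ range (r+1), c ν * ∑ j ∈ range N, (j:ℚ_[p])^(mm ν - 1) * (((a*j)/N : ℕ) : ℚ_[p]))
          = ∑ ν ∈ range (r+1), ∑ j ∈ range N, c ν * ((j:ℚ_[p])^(mm ν - 1) * (((a*j)/N : ℕ) : ℚ_[p]))
          from Finset.sum_congr rfl fun ν _ => Finset.mul_sum _ _ _]
      rw [Finset.sum_comm]
      refine Finset.sum_congr rfl (fun j hj => ?_)
      have h2 : ∑ ν ∈ range (r+1), c ν * ((j:ℚ_[p])^(mm ν - 1) * (((a*j)/N : ℕ) : ℚ_[p]))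
          = (∑ ν ∈ range (r+1), c ν * (j:ℚ_[p])^(mm ν - 1)) * (((a*j)/N : ℕ) : ℚ_[p]) := by
        rw [Finset.sum_mul]
        exact Finset.sum_congr rfl fun ν _ => by ring
      rw [h2]
      congr 1
      rw [sub_eq_add_neg, add_pow, Finset.mul_sum]
      refine Finset.sum_congr rfl (fun ν hν => ?_)
      have he : mm ν - 1 = (n-1) + (p-1)*ν := by
        simp only [hmmdef]; rw [mul_comm (p-1) ν]; omega
      rw [he, pow_add, pow_mul, hcdef]
      ring
    rw [hswap]
    refine pnorm_sum_le _ _ (by positivity) ?_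
    intro j hj
    rw [norm_mul, norm_mul]
    have hq : ‖(((a*j)/N : ℕ) : ℚ_[p])‖ ≤ 1 := pnorm_nat_le_one _
    by_cases hpj : p ∣ j
    · have h1 : ‖(j:ℚ_[p])‖ ≤ (p:ℝ)^(-(1:ℤ)) := by
        have he : ((j:ℤ):ℚ_[p]) = (j:ℚ_[p]) := by push_cast; rfl
        rw [← he]
        refine (Padic.norm_int_le_pow_iff_dvd _ 1).mpr ?_
        simpa using Int.natCast_dvd_natCast.mpr hpj
      have h2 : ‖(j:ℚ_[p])^(n-1)‖ ≤ (p:ℝ)^(-((n:ℤ)-1)) := by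
        rw [norm_pow]
        calc ‖(j:ℚ_[p])‖^(n-1) ≤ ((p:ℝ)^(-(1:ℤ)))^(n-1) :=
              pow_le_pow_left₀ (norm_nonneg _) h1 _
          _ = (p:ℝ)^(-((n-1:ℕ):ℤ)) := by
              rw [← zpow_natCast (((p:ℝ))^(-(1:ℤ))) (n-1), ← zpow_mul]; norm_num
          _ = (p:ℝ)^(-((n:ℤ)-1)) := by
              congr 1
              have : ((n-1:ℕ):ℤ) = (n:ℤ)-1 := by omega
              rw [this]
      have h3 : ‖((j:ℚ_[p])^(p-1) - 1)^r‖ ≤ 1 := by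
        rw [norm_pow]
        refine pow_le_one₀ (norm_nonneg _) ?_
        refine le_trans (pnorm_sub_le_max _ _) (max_le ?_ (by norm_num))
        rw [norm_pow]
        exact pow_le_one₀ (norm_nonneg _) (pnorm_nat_le_one _)
      calc ‖(j:ℚ_[p])^(n-1)‖ * ‖((j:ℚ_[p])^(p-1) - 1)^r‖ * ‖(((a*j)/N : ℕ) : ℚ_[p])‖
          ≤ (p:ℝ)^(-((n:ℤ)-1)) * 1 * 1 := by
            refine mul_le_mul (mul_le_mul h2 h3 (norm_nonneg _) (by positivity)) hq
              (norm_nonneg _) (by positivity)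
        _ = (p:ℝ)^(-((n:ℤ)-1)) := by ring
        _ ≤ _ := zpow_le_zpow_right₀ hp1R (by omega)
    · have h1 : ‖(j:ℚ_[p])^(p-1) - 1‖ ≤ (p:ℝ)^(-(1:ℤ)) := by
        have he : (((j:ℤ)^(p-1) - 1 : ℤ) : ℚ_[p]) = (j:ℚ_[p])^(p-1) - 1 := by push_cast; rfl
        rw [← he]
        refine (Padic.norm_int_le_pow_iff_dvd _ 1).mpr ?_
        have hj0 : (j : ZMod p) ≠ 0 := fun h => hpj ((ZMod.natCast_eq_zero_iff _ _).mp h)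
        have hfermat := ZMod.pow_card_sub_one_eq_one hj0
        rw [pow_one, ← ZMod.intCast_zmod_eq_zero_iff_dvd]
        push_cast
        rw [hfermat, sub_self]
      have h2 : ‖((j:ℚ_[p])^(p-1) - 1)^r‖ ≤ (p:ℝ)^(-(r:ℤ)) := by
        rw [norm_pow]
        calc ‖(j:ℚ_[p])^(p-1) - 1‖^r ≤ ((p:ℝ)^(-(1:ℤ)))^r :=
              pow_le_pow_left₀ (norm_nonneg _) h1 _
          _ = (p:ℝ)^(-(r:ℤ)) := by
              rw [← zpow_natCast (((p:ℝ))^(-(1:ℤ))) r, ← zpow_mul]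
              norm_num
      have h3 : ‖(j:ℚ_[p])^(n-1)‖ ≤ 1 := by
        rw [norm_pow]
        exact pow_le_one₀ (norm_nonneg _) (pnorm_nat_le_one _)
      calc ‖(j:ℚ_[p])^(n-1)‖ * ‖((j:ℚ_[p])^(p-1) - 1)^r‖ * ‖(((a*j)/N : ℕ) : ℚ_[p])‖
          ≤ 1 * ((p:ℝ)^(-(r:ℤ))) * 1 := by
            refine mul_le_mul (mul_le_mul h3 h2 (norm_nonneg _) (by norm_num)) hq
              (norm_nonneg _) (by positivity)
        _ = (p:ℝ)^(-(r:ℤ)) := by ring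
  -- final combination
  set S : ℚ_[p] := ∑ ν ∈ range (r+1), c ν * b ν with hSdef
  have hcomb : (A - w^(n-1)) * S
      = (∑ ν ∈ range (r+1), c ν * ((A - w^(n-1)) * b ν - Φf ν))
        + ∑ ν ∈ range (r+1), c ν * Φf ν := by
    rw [hSdef, Finset.mul_sum, ← Finset.sum_add_distrib]
    exact Finset.sum_congr rfl fun ν _ => by ring
  have hns : ‖(A - w^(n-1)) * S‖ ≤ (p:ℝ)^(-(r:ℤ)) := by
    rw [hcomb]
    refine le_trans (Padic.nonarchimedean _ _) (max_le ?_ hΦsum)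
    refine pnorm_sum_le _ _ (by positivity) ?_
    intro ν hν
    rw [norm_mul]
    calc ‖c ν‖ * ‖(A - w^(n-1)) * b ν - Φf ν‖ ≤ 1 * ((p:ℝ)^(-(r:ℤ))) :=
          mul_le_mul (hcnorm ν) (hstep ν hν) (norm_nonneg _) (by norm_num)
      _ = (p:ℝ)^(-(r:ℤ)) := one_mul _
  have hn1' : n - 1 + 1 = n := by omega
  have hpown : w^(n-1) * A^n = A := by
    calc w^(n-1) * A^n = w^(n-1) * (A^(n-1) * A) := by rw [← pow_succ, hn1']
      _ = (w^(n-1) * A^(n-1)) * A := by ring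
      _ = A := by rw [← mul_pow, hwA, one_pow, one_mul]
  have hunit : ‖A - w^(n-1)‖ = 1 := by
    have hid : A - w^(n-1) = w^(n-1) * (A^n - 1) := by
      linear_combination -hpown
    have hAn : ‖A^n - 1‖ = 1 := by
      have he : (((a:ℤ)^n - 1 : ℤ) : ℚ_[p]) = A^n - 1 := by push_cast; rfl
      refine le_antisymm (he ▸ Padic.norm_int_le_one _) ?_
      have h1 := (Padic.norm_intCast_lt_one_iff (p := p) (k := (a:ℤ)^n - 1)).not.mpr (hapow n hnd)
      rw [he] at h1
      exact le_of_not_gt h1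
    rw [hid, norm_mul, norm_pow, hwnorm, one_pow, one_mul, hAn]
  have hSnorm : ‖S‖ ≤ (p:ℝ)^(-(r:ℤ)) := by
    have heq : ‖(A - w^(n-1)) * S‖ = ‖S‖ := by rw [norm_mul, hunit, one_mul]
    rw [← heq]
    exact hns
  have hmatch : ((∑ ν ∈ Finset.range (r + 1),
      (r.choose ν : ℚ) * (-1) ^ (r - ν) *
        (bernoulli (n + ν * (p - 1)) / (n + ν * (p - 1)) : ℚ) : ℚ) : ℚ_[p]) = S := by
    rw [hSdef]
    push_cast
    refine Finset.sum_congr rfl (fun ν hν => ?_)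
    simp only [hcdef, hbdef, hmmdef]
    have hcast : ((n:ℚ_[p]) + (ν:ℚ_[p]) * ((p:ℚ_[p]) - 1)) = ((n + ν*(p-1) : ℕ) : ℚ_[p]) := by
      push_cast [Nat.cast_sub (by omega : 1 ≤ p)]
      ring
    rw [← hcast]
  rw [hmatch]
  exact hSnorm
end

section
/- Let p ≥ 5 be a prime and let B̄_1 = (B_{p-1} + 1/p - 1)/(p-1) and B̄_2 = (B_{2(p-1)} + 1/p - 1)/(2(p-1)). Then B̄_1 ≡ B̄_2 (mod p) in the p-adic integers. -/
set_option linter.unusedSectionVars false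

namespace DividedBernoulliAux
open Finset
variable {p : ℕ} [hp : Fact p.Prime]

lemma choose_id (n k : ℕ) (h : k ≤ n) : (n+1) * n.choose k = (n+1).choose k * (n+1-k) := by
  have h2 := Nat.add_one_mul_choose_eq n (n - k)
  rw [Nat.choose_symm h] at h2
  rw [show n + 1 - k = n - k + 1 by omega, h2,
    show n - k + 1 = (n+1) - k by omega, Nat.choose_symm (by omega)]

lemma pB_eq (m : ℕ) : (p:ℚ) * bernoulli m =
    (∑ k ∈ range p, (k:ℚ)^m)
    - ∑ i ∈ range m, bernoulli i * ((m+1).choose i) * (p:ℚ)^(m+1-i) / ((m:ℚ)+1) := by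
  have F := sum_range_pow p m
  rw [Finset.sum_range_succ, Nat.choose_succ_self_right, show m+1-m = 1 by omega] at F
  have h1 : ((m:ℚ)+1) ≠ 0 := by positivity
  have : bernoulli m * ((m+1:ℕ):ℚ) * (p:ℚ)^1 / ((m:ℚ)+1) = (p:ℚ) * bernoulli m := by
    push_cast; field_simp
  rw [this] at F
  linarith [F]

lemma term_eq (m i : ℕ) (h : i ≤ m) :
    bernoulli i * ((m+1).choose i) * (p:ℚ)^(m+1-i) / ((m:ℚ)+1)
    = ((p:ℚ) * bernoulli i) * (m.choose i) * ((p:ℚ)^(m-i) / (((m-i:ℕ):ℚ)+1)) := by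
  have hc : ((m+1) * m.choose i : ℕ) = ((m+1).choose i * ((m-i)+1) : ℕ) := by
    rw [choose_id m i h]; congr 1; omega
  have hcq : ((m:ℚ)+1) * (m.choose i : ℚ) = ((m+1).choose i : ℚ) * (((m-i:ℕ):ℚ)+1) := by
    exact_mod_cast hc
  have hpow : (p:ℚ)^(m+1-i) = (p:ℚ) * (p:ℚ)^(m-i) := by
    rw [show m+1-i = (m-i)+1 by omega, pow_succ]; ring
  have h1 : ((m:ℚ)+1) ≠ 0 := by positivity
  have h2 : (((m-i:ℕ):ℚ)+1) ≠ 0 := by positivity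
  rw [hpow, mul_div_assoc' ((p:ℚ) * bernoulli i * (m.choose i : ℚ)), div_eq_div_iff h1 h2]
  linear_combination (-(bernoulli i * (p:ℚ)^(m-i) * (p:ℚ))) * hcq

lemma norm_nat_eq (n : ℕ) (hn : n ≠ 0) :
    ‖(n : ℚ_[p])‖ = (p:ℝ)^(-(n.factorization p : ℤ)) := by
  set v := n.factorization p with hv
  obtain ⟨u, hu0, hdecomp⟩ : ∃ u : ℕ, ¬ (p:ℤ) ∣ (u:ℤ) ∧ n = p ^ v * u := by
    refine ⟨n / p ^ v, ?_, (Nat.ordProj_mul_ordCompl_eq_self n p).symm⟩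
    exact_mod_cast Nat.not_dvd_ordCompl hp.out hn
  have hu1 : ‖((u : ℤ) : ℚ_[p])‖ = 1 := by
    refine le_antisymm (Padic.norm_int_le_one _) ?_
    by_contra h
    exact hu0 (Padic.norm_intCast_lt_one_iff.mp (lt_of_not_ge h))
  have hc : (n : ℚ_[p]) = (p:ℚ_[p])^v * ((u:ℤ) : ℚ_[p]) := by
    rw [hdecomp]; push_cast; ring
  rw [hc, norm_mul, hu1, Padic.norm_p_pow, mul_one]

lemma norm_powdiv (q : ℚ) (j : ℕ) (hq : q = (p:ℚ)^j / ((j:ℚ)+1)) :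
    ‖(q : ℚ_[p])‖ = (p:ℝ)^(((j+1).factorization p : ℤ) - j) := by
  have h1 : ((q : ℚ) : ℚ_[p]) = (p:ℚ_[p])^j / ((j+1 : ℕ) : ℚ_[p]) := by
    rw [hq]; push_cast; ring
  rw [h1, norm_div, Padic.norm_p_pow, norm_nat_eq (j+1) (by omega),
    ← zpow_sub₀ (by exact_mod_cast hp.out.ne_zero : (p:ℝ) ≠ 0)]
  ring_nf

lemma fact_le_one (j : ℕ) : ((j+1).factorization p : ℤ) - j ≤ 0 := by
  have h1 : p ^ ((j+1).factorization p) ≤ j + 1 := Nat.ordProj_le p (by omega)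
  have h2 : (j+1).factorization p < 2 ^ ((j+1).factorization p) := Nat.lt_two_pow_self
  have h3 : 2 ^ ((j+1).factorization p) ≤ p ^ ((j+1).factorization p) :=
    Nat.pow_le_pow_left hp.out.two_le _
  omega

lemma fact_le_two (hp5 : 5 ≤ p) (j : ℕ) (hj : 2 ≤ j) :
    ((j+1).factorization p : ℤ) - j ≤ -2 := by
  set v := (j+1).factorization p with hv
  have h1 : p ^ v ≤ j + 1 := Nat.ordProj_le p (by omega)
  rcases Nat.eq_zero_or_pos v with h | h
  · omega
  · have h4 : ∀ w, 1 ≤ w → w + 3 ≤ 5 ^ w := by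
      intro w hw
      induction w with
      | zero => omega
      | succ k ih =>
        rcases Nat.eq_zero_or_pos k with rfl | hk
        · norm_num
        · have h6 := ih hk
          have : 5 ^ k ≤ 5 ^ (k+1) := Nat.pow_le_pow_right (by norm_num) (by omega)
          omega
    have h5 := h4 v h
    have h6 : 5 ^ v ≤ p ^ v := Nat.pow_le_pow_left hp5 _
    omega

lemma norm_powdiv_le_one (j : ℕ) (q : ℚ) (hq : q = (p:ℚ)^j / ((j:ℚ)+1)) :
    ‖(q : ℚ_[p])‖ ≤ 1 := by
  rw [norm_powdiv q j hq]
  calc ((p:ℝ))^(((j+1).factorization p : ℤ) - j) ≤ (p:ℝ)^(0:ℤ) := by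
        apply zpow_le_zpow_right₀ (by exact_mod_cast hp.out.one_lt.le) (fact_le_one j)
    _ = 1 := by norm_num

lemma norm_powdiv_le_two (hp5 : 5 ≤ p) (j : ℕ) (hj : 2 ≤ j) (q : ℚ)
    (hq : q = (p:ℚ)^j / ((j:ℚ)+1)) :
    ‖(q : ℚ_[p])‖ ≤ (p:ℝ)^(-2:ℤ) := by
  rw [norm_powdiv q j hq]
  exact zpow_le_zpow_right₀ (by exact_mod_cast hp.out.one_lt.le) (fact_le_two hp5 j hj)

lemma norm_nat_pow_sum (m : ℕ) :
    ‖((∑ k ∈ range p, (k:ℚ)^m : ℚ) : ℚ_[p])‖ ≤ 1 := by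
  have hS : ((∑ k ∈ range p, (k:ℚ)^m : ℚ) : ℚ_[p]) = (((∑ k ∈ range p, k^m : ℕ) : ℤ) : ℚ_[p]) := by
    push_cast; rfl
  rw [hS]; exact Padic.norm_int_le_one _

lemma normA (m : ℕ) : ‖(((p:ℚ) * bernoulli m : ℚ) : ℚ_[p])‖ ≤ 1 := by
  induction m using Nat.strong_induction_on with
  | _ m ih =>
    rw [pB_eq m, Rat.cast_sub, sub_eq_add_neg]
    refine (Padic.nonarchimedean _ _).trans (max_le (norm_nat_pow_sum m) ?_)
    rw [norm_neg, Rat.cast_sum]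
    refine IsUltrametricDist.norm_sum_le_of_forall_le_of_nonneg zero_le_one ?_
    intro i hi
    rw [term_eq m i (le_of_lt (mem_range.mp hi)), Rat.cast_mul, Rat.cast_mul, norm_mul, norm_mul]
    have b1 : ‖(((p:ℚ) * bernoulli i : ℚ) : ℚ_[p])‖ ≤ 1 := ih i (mem_range.mp hi)
    have b2 : ‖((m.choose i : ℚ) : ℚ_[p])‖ ≤ 1 := by
      rw [show ((m.choose i : ℚ) : ℚ_[p]) = ((m.choose i : ℤ) : ℚ_[p]) by push_cast; rfl]
      exact Padic.norm_int_le_one _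
    have b3 : ‖(((p:ℚ)^(m-i) / (((m-i:ℕ):ℚ)+1) : ℚ) : ℚ_[p])‖ ≤ 1 :=
      norm_powdiv_le_one (m-i) _ rfl
    calc ‖(((p:ℚ) * bernoulli i : ℚ) : ℚ_[p])‖ * ‖((m.choose i : ℚ) : ℚ_[p])‖ *
          ‖(((p:ℚ)^(m-i) / (((m-i:ℕ):ℚ)+1) : ℚ) : ℚ_[p])‖ ≤ 1 * 1 * 1 := by
          gcongr <;> positivity
      _ = 1 := by norm_num

lemma normB (hp5 : 5 ≤ p) (m : ℕ) (hm : 4 ≤ m) (hodd : bernoulli (m-1) = 0) :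
    ‖(((p:ℚ) * bernoulli m - ∑ k ∈ range p, (k:ℚ)^m : ℚ) : ℚ_[p])‖ ≤ (p:ℝ)^(-2:ℤ) := by
  obtain ⟨m', rfl⟩ : ∃ m', m = m' + 1 := ⟨m-1, by omega⟩
  have hodd' : bernoulli m' = 0 := by simpa using hodd
  have heq : (p:ℚ) * bernoulli (m'+1) - ∑ k ∈ range p, (k:ℚ)^(m'+1)
      = -∑ i ∈ range m', bernoulli i * ((m'+1+1).choose i) * (p:ℚ)^(m'+1+1-i) / (((m'+1:ℕ):ℚ)+1) := by
    rw [pB_eq (m'+1), Finset.sum_range_succ, hodd']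
    ring
  rw [heq, Rat.cast_neg, norm_neg, Rat.cast_sum]
  refine IsUltrametricDist.norm_sum_le_of_forall_le_of_nonneg (C := (p:ℝ)^(-2:ℤ)) (zpow_nonneg (Nat.cast_nonneg p) _) ?_
  intro i hi
  have him : i < m' := mem_range.mp hi
  rw [term_eq (m'+1) i (by omega), Rat.cast_mul, Rat.cast_mul, norm_mul, norm_mul]
  have b1 : ‖(((p:ℚ) * bernoulli i : ℚ) : ℚ_[p])‖ ≤ 1 := normA i
  have b2 : ‖(((m'+1).choose i : ℚ) : ℚ_[p])‖ ≤ 1 := by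
    rw [show (((m'+1).choose i : ℚ) : ℚ_[p]) = (((m'+1).choose i : ℤ) : ℚ_[p]) by push_cast; rfl]
    exact Padic.norm_int_le_one _
  have b3 : ‖(((p:ℚ)^(m'+1-i) / (((m'+1-i:ℕ):ℚ)+1) : ℚ) : ℚ_[p])‖ ≤ (p:ℝ)^(-2:ℤ) :=
    norm_powdiv_le_two hp5 (m'+1-i) (by omega) _ rfl
  calc ‖(((p:ℚ) * bernoulli i : ℚ) : ℚ_[p])‖ * ‖(((m'+1).choose i : ℚ) : ℚ_[p])‖ *
        ‖(((p:ℚ)^(m'+1-i) / (((m'+1-i:ℕ):ℚ)+1) : ℚ) : ℚ_[p])‖ ≤ 1 * 1 * ((p:ℝ)^(-2:ℤ)) := by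
        gcongr <;> positivity
    _ = (p:ℝ)^(-2:ℤ) := by norm_num

lemma bern_odd_zero (n : ℕ) (hodd : Odd n) (h1 : 1 < n) : bernoulli n = 0 := by
  rw [bernoulli_eq_bernoulli'_of_ne_one (by omega)]
  exact bernoulli'_eq_zero_of_odd hodd h1

lemma fermat_bound (hp5 : 5 ≤ p) (a : ℕ) (ha1 : 1 ≤ a) (ha2 : a < p) :
    ‖((((a:ℚ)^(p-1) - 1) : ℚ) : ℚ_[p])‖ ≤ (p:ℝ)^(-1:ℤ) := by
  have h1 : ((((a:ℚ)^(p-1) - 1) : ℚ) : ℚ_[p]) = ((((a:ℤ)^(p-1) - 1 : ℤ)) : ℚ_[p]) := by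
    push_cast; ring
  rw [h1]
  have h2 : ((p:ℝ)^(-1:ℤ)) = ((p:ℝ)^(-(1:ℕ):ℤ)) := by norm_num
  rw [h2, Padic.norm_int_le_pow_iff_dvd]
  have ha : (a : ZMod p) ≠ 0 := by
    rw [Ne, ZMod.natCast_eq_zero_iff]
    intro h
    exact absurd (Nat.le_of_dvd (by omega) h) (by omega)
  have h3 : ((a:ZMod p))^(p-1) = 1 := ZMod.pow_card_sub_one_eq_one ha
  have h4 : (((a:ℤ)^(p-1) - 1 : ℤ) : ZMod p) = 0 := by push_cast [h3]; ring
  rw [ZMod.intCast_zmod_eq_zero_iff_dvd] at h4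
  simpa using h4

lemma Zsum_eq (hp5 : 5 ≤ p) :
    (2*(∑ k ∈ range p, (k:ℚ)^(p-1)) - (∑ k ∈ range p, (k:ℚ)^(2*(p-1))) + 1 - p : ℚ)
    = -∑ a ∈ Ico 1 p, ((a:ℚ)^(p-1) - 1)^2 := by
  have h0 : ∀ n : ℕ, 1 ≤ n → ∑ k ∈ range p, (k:ℚ)^n = ∑ k ∈ Ico 1 p, (k:ℚ)^n := by
    intro n hn
    rw [range_eq_Ico, Finset.sum_eq_sum_Ico_succ_bot hp.out.pos]
    simp [zero_pow (by omega : n ≠ 0)]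
  rw [h0 (p-1) (by omega), h0 (2*(p-1)) (by omega)]
  have expand : ∀ a : ℕ, ((a:ℚ)^(p-1) - 1)^2 = (a:ℚ)^(2*(p-1)) - 2*(a:ℚ)^(p-1) + 1 := by
    intro a; rw [two_mul, pow_add]; ring
  rw [Finset.sum_congr rfl (fun a _ => expand a)]
  rw [Finset.sum_add_distrib, Finset.sum_sub_distrib, Finset.sum_const, Nat.card_Ico,
    ← Finset.mul_sum]
  have : ((p - 1 : ℕ) : ℚ) = (p:ℚ) - 1 := by
    push_cast [Nat.cast_sub (by omega : 1 ≤ p)]; ring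
  rw [nsmul_eq_mul, this]
  ring

lemma norm_two_mul_p_sub_one (hp5 : 5 ≤ p) :
    ‖((2*((p:ℚ)-1) : ℚ) : ℚ_[p])‖ = 1 := by
  have h1 : ((2*((p:ℚ)-1) : ℚ) : ℚ_[p]) = (((2*(p-1) : ℕ) : ℤ) : ℚ_[p]) := by
    push_cast [Nat.cast_sub (by omega : 1 ≤ p)]; ring
  rw [h1]
  refine le_antisymm (Padic.norm_int_le_one _) ?_
  by_contra h
  have h2 := Padic.norm_intCast_lt_one_iff.mp (lt_of_not_ge h)
  have h3 : p ∣ 2*(p-1) := by exact_mod_cast h2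
  rcases (Nat.Prime.dvd_mul hp.out).mp h3 with h4 | h4
  · have := Nat.le_of_dvd (by omega) h4; omega
  · have := Nat.le_of_dvd (by omega) h4; omega

theorem main_bound (hp5 : 5 ≤ p) :
    ‖((((bernoulli (p - 1) + 1 / p - 1) / (p - 1)
        - (bernoulli (2 * (p - 1)) + 1 / p - 1) / (2 * (p - 1))) : ℚ) : ℚ_[p])‖
      ≤ (p : ℝ) ^ (-1 : ℤ) := by
  have hpQ : (p:ℚ) ≠ 0 := by positivity
  have hp1Q : (p:ℚ) - 1 ≠ 0 := by
    have : (5:ℚ) ≤ p := by exact_mod_cast hp5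
    intro h; nlinarith
  -- abbreviations
  set S1 : ℚ := ∑ k ∈ range p, (k:ℚ)^(p-1) with hS1
  set S2 : ℚ := ∑ k ∈ range p, (k:ℚ)^(2*(p-1)) with hS2
  set E : ℚ := 2*((p:ℚ)*bernoulli (p-1) + 1 - p) - ((p:ℚ)*bernoulli (2*(p-1)) + 1 - p) with hE
  have hkey : ((bernoulli (p - 1) + 1 / p - 1) / ((p:ℚ) - 1)
      - (bernoulli (2 * (p - 1)) + 1 / p - 1) / (2 * ((p:ℚ) - 1)))
      = E / ((p:ℚ) * (2*((p:ℚ)-1))) := by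
    rw [hE]; field_simp
  rw [hkey, Rat.cast_div, norm_div, Rat.cast_mul, norm_mul, norm_two_mul_p_sub_one hp5]
  have hnp : ‖(((p:ℚ)) : ℚ_[p])‖ = (p:ℝ)^(-1:ℤ) := by
    rw [show (((p:ℚ)) : ℚ_[p]) = (p : ℚ_[p]) by push_cast; ring, Padic.norm_p]
    simp [zpow_neg_one]
  rw [hnp, mul_one]
  have hppos : (0:ℝ) < (p:ℝ)^(-1:ℤ) := by positivity
  rw [div_le_iff₀ hppos]
  have hgoal : ‖(E : ℚ_[p])‖ ≤ (p:ℝ)^(-2:ℤ) := by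
    have hoddp := hp.out.odd_of_ne_two (by omega)
    have hb1 : bernoulli (p-1-1) = 0 := by
      obtain ⟨k, hk⟩ := hoddp
      exact bern_odd_zero _ ⟨k-1, by omega⟩ (by omega)
    have hb2 : bernoulli (2*(p-1)-1) = 0 := bern_odd_zero _ ⟨p-2, by omega⟩ (by omega)
    have B1 := normB hp5 (p-1) (by omega) hb1
    have B2 := normB hp5 (2*(p-1)) (by omega) hb2
    rw [← hS1] at B1
    rw [← hS2] at B2
    have hZ := Zsum_eq hp5 (p := p)
    rw [← hS1, ← hS2] at hZ
    have hdec : E = (2*((p:ℚ)*bernoulli (p-1) - S1) - ((p:ℚ)*bernoulli (2*(p-1)) - S2))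
        + (2*S1 - S2 + 1 - p) := by rw [hE]; ring
    rw [hdec, Rat.cast_add]
    refine (Padic.nonarchimedean _ _).trans (max_le ?_ ?_)
    · rw [Rat.cast_sub, sub_eq_add_neg]
      refine (Padic.nonarchimedean _ _).trans (max_le ?_ ?_)
      · rw [Rat.cast_mul, norm_mul]
        have h2 : ‖((2:ℚ) : ℚ_[p])‖ ≤ 1 := by
          rw [show ((2:ℚ) : ℚ_[p]) = ((2:ℤ) : ℚ_[p]) by push_cast; ring]
          exact Padic.norm_int_le_one _
        calc ‖((2:ℚ) : ℚ_[p])‖ * ‖(((p:ℚ)*bernoulli (p-1) - S1 : ℚ) : ℚ_[p])‖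
            ≤ 1 * ((p:ℝ)^(-2:ℤ)) := by gcongr
          _ = (p:ℝ)^(-2:ℤ) := one_mul _
      · rw [norm_neg]; exact B2
    · rw [hZ, Rat.cast_neg, norm_neg, Rat.cast_sum]
      refine IsUltrametricDist.norm_sum_le_of_forall_le_of_nonneg
        (zpow_nonneg (Nat.cast_nonneg p) _) ?_
      intro a ha
      obtain ⟨ha1, ha2⟩ := mem_Ico.mp ha
      rw [Rat.cast_pow, norm_pow]
      have hf := fermat_bound hp5 a ha1 ha2
      calc ‖((((a:ℚ)^(p-1) - 1) : ℚ) : ℚ_[p])‖^2 ≤ ((p:ℝ)^(-1:ℤ))^2 := by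
            gcongr
        _ = (p:ℝ)^(-2:ℤ) := by
            rw [← zpow_natCast ((p:ℝ)^(-1:ℤ)) 2, ← zpow_mul]; norm_num
  calc ‖(E : ℚ_[p])‖ ≤ (p:ℝ)^(-2:ℤ) := hgoal
    _ = (p:ℝ)^(-1:ℤ) * (p:ℝ)^(-1:ℤ) := by
      rw [← zpow_add₀ (by positivity : (p:ℝ) ≠ 0)]; norm_num

end DividedBernoulliAux

theorem divided_bernoulli_kummer (p : ℕ) [hp : Fact p.Prime] (hp5 : 5 ≤ p) :
    ‖((((bernoulli (p - 1) + 1 / p - 1) / (p - 1)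
        - (bernoulli (2 * (p - 1)) + 1 / p - 1) / (2 * (p - 1))) : ℚ) : ℚ_[p])‖
      ≤ (p : ℝ) ^ (-1 : ℤ) := DividedBernoulliAux.main_bound hp5
end

section
/- Let p ≥ 7 be a prime. Then the Wilson quotient satisfies W_p ≡ -5B̄_1 + 10B̄_2 - 10B̄_3 + 5B̄_4 - B̄_5 (mod p), where B̄_n = (B_{n(p-1)} + 1/p - 1)/(n(p-1)). -/
open Finset

namespace WQBC

variable {p : ℕ} [hp : Fact p.Prime]

lemma padd {a b : ℚ_[p]} {c : ℝ} (ha : ‖a‖ ≤ c) (hb : ‖b‖ ≤ c) : ‖a + b‖ ≤ c :=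
  (Padic.nonarchimedean a b).trans (max_le ha hb)

lemma psub {a b : ℚ_[p]} {c : ℝ} (ha : ‖a‖ ≤ c) (hb : ‖b‖ ≤ c) : ‖a - b‖ ≤ c := by
  rw [sub_eq_add_neg]; exact padd ha (by rwa [norm_neg])

lemma pnat (n : ℕ) : ‖(n : ℚ_[p])‖ ≤ 1 := by
  have := Padic.norm_int_le_one (p := p) (n : ℤ)
  push_cast at this; exact this

lemma pnat_eq_one {n : ℕ} (h : ¬ p ∣ n) : ‖(n : ℚ_[p])‖ = 1 := by
  refine le_antisymm (pnat n) ?_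
  by_contra hlt
  push_neg at hlt
  have : ‖((n : ℤ) : ℚ_[p])‖ < 1 := by push_cast; exact hlt
  rw [Padic.norm_intCast_lt_one_iff] at this
  exact h (by exact_mod_cast this)

lemma norm_p_pow (m : ℕ) : ‖((p : ℚ_[p]))^m‖ = (p : ℝ) ^ (-(m:ℤ)) := by
  rw [norm_pow, Padic.norm_p]
  rw [inv_pow, ← zpow_natCast, ← zpow_neg]


variable {p : ℕ} [hp : Fact p.Prime]

lemma aux_ord {e : ℕ} (hpge : 2 ≤ p) (he : 1 ≤ e) : e + (p - 1) ≤ p ^ e := by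
  induction e with
  | zero => omega
  | succ n ih =>
    rcases Nat.eq_zero_or_pos n with h | h
    · subst h; simpa using by omega
    · have h1 := ih h
      have h2 : p ^ n ≥ 1 := Nat.one_le_pow _ _ (by omega)
      calc n + 1 + (p - 1) ≤ p ^ n + 1 := by omega
        _ ≤ p ^ n * p := by nlinarith
        _ = p ^ (n + 1) := by ring

lemma norm_pow_div_le (m t : ℕ) (hm : 1 ≤ m) (ht : t ≤ m) (htp : t ≤ p - 1) :
    ‖((p : ℚ_[p])^m / (m : ℚ_[p]))‖ ≤ (p : ℝ) ^ (-(t:ℤ)) := by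
  have hp2 : 2 ≤ p := hp.1.two_le
  set e := m.factorization p with he
  have hm0 : m ≠ 0 := by omega
  have hdvd : p ^ e ∣ m := Nat.ordProj_dvd m p
  set u := m / p ^ e with hu
  have hmu : m = p ^ e * u := (Nat.mul_div_cancel' hdvd).symm
  have hpu : ¬ p ∣ u := Nat.not_dvd_ordCompl hp.1 hm0
  have hte : t ≤ m - e := by
    rcases Nat.eq_zero_or_pos e with h | h
    · omega
    · have h1 : p ^ e ≤ m := Nat.ordProj_le p hm0
      have h2 := aux_ord hp2 h
      omega
  have hem : e ≤ m := by
    rcases Nat.eq_zero_or_pos e with h | h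
    · omega
    · have h1 : p ^ e ≤ m := Nat.ordProj_le p hm0
      have h2 := aux_ord hp2 h
      omega
  have hcast : (m : ℚ_[p]) = (p : ℚ_[p]) ^ e * (u : ℚ_[p]) := by
    rw [hmu]; push_cast; ring
  have hpne : (p : ℚ_[p]) ≠ 0 := by
    exact_mod_cast (Nat.cast_ne_zero (R := ℚ_[p])).2 (by omega)
  have hune : (u : ℚ_[p]) ≠ 0 := by
    have : u ≠ 0 := by intro h0; rw [h0, Nat.mul_zero] at hmu; omega
    exact_mod_cast (Nat.cast_ne_zero (R := ℚ_[p])).2 this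
  have hsplit : (p : ℚ_[p])^m / (m : ℚ_[p]) = (p : ℚ_[p])^(m - e) / (u : ℚ_[p]) := by
    rw [hcast, ← pow_sub_mul_pow (p : ℚ_[p]) hem]
    field_simp
  rw [hsplit, norm_div, norm_p_pow, pnat_eq_one hpu, div_one]
  have hp1 : (1 : ℝ) ≤ (p : ℝ) := by exact_mod_cast hp2.trans' (by norm_num)
  apply zpow_le_zpow_right₀ hp1
  omega

variable {p : ℕ} [hp : Fact p.Prime]

lemma binom (m : ℕ) {f : ℚ_[p]} (hf : ‖f‖ ≤ 1) :
    ‖(1 + f)^m - 1 - m * f‖ ≤ ‖f‖^2 := by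
  induction m with
  | zero => simpa using sq_nonneg ‖f‖
  | succ m ih =>
    have key : (1+f)^(m+1) - 1 - (m+1 : ℕ) * f
        = (1+f)*((1+f)^m - 1 - m * f) + (m : ℚ_[p]) * f^2 := by push_cast; ring
    rw [key]
    refine padd ?_ ?_
    · rw [norm_mul]
      have h1 : ‖1 + f‖ ≤ 1 := padd (by simp) hf
      calc ‖1+f‖ * ‖(1+f)^m - 1 - m*f‖ ≤ 1 * ‖f‖^2 :=
            mul_le_mul h1 ih (norm_nonneg _) (by norm_num)
        _ = ‖f‖^2 := one_mul _
    · rw [norm_mul, norm_pow]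
      calc ‖(m:ℚ_[p])‖ * ‖f‖^2 ≤ 1 * ‖f‖^2 :=
            mul_le_mul_of_nonneg_right (pnat m) (sq_nonneg _)
        _ = ‖f‖^2 := one_mul _

lemma prod_approx {ι : Type*} (s : Finset ι) (f : ι → ℚ_[p])
    (hf : ∀ i ∈ s, ‖f i‖ ≤ (p:ℝ)^(-1:ℤ)) :
    ‖(∏ i ∈ s, (1 + f i)) - 1 - ∑ i ∈ s, f i‖ ≤ (p:ℝ)^(-2:ℤ) := by
  have hppos : (0:ℝ) < p := by exact_mod_cast hp.1.pos
  have hnn : (0:ℝ) ≤ (p:ℝ)^(-1:ℤ) := le_of_lt (zpow_pos hppos _)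
  have hsq : (p:ℝ)^(-1:ℤ) * (p:ℝ)^(-1:ℤ) = (p:ℝ)^(-2:ℤ) := by
    rw [← zpow_add₀ (ne_of_gt hppos)]; norm_num
  induction s using Finset.cons_induction with
  | empty => simpa using le_of_lt (zpow_pos hppos _)
  | cons a s ha ih =>
    have hfa : ‖f a‖ ≤ (p:ℝ)^(-1:ℤ) := hf a (mem_cons_self a s)
    have hfs : ∀ i ∈ s, ‖f i‖ ≤ (p:ℝ)^(-1:ℤ) := fun i hi => hf i (mem_cons_of_mem hi)
    have ihs := ih hfs
    set P := ∏ i ∈ s, (1 + f i)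
    set S := ∑ i ∈ s, f i
    have hS : ‖S‖ ≤ (p:ℝ)^(-1:ℤ) :=
      IsUltrametricDist.norm_sum_le_of_forall_le_of_nonneg hnn hfs
    rw [prod_cons, sum_cons]
    have key : (1 + f a) * P - 1 - (f a + S)
        = (1 + f a) * (P - 1 - S) + f a * S := by ring
    rw [key]
    refine padd ?_ ?_
    · rw [norm_mul]
      have h1 : ‖1 + f a‖ ≤ 1 := padd (by simp) (hfa.trans (by
        apply zpow_le_one_of_nonpos₀ (by exact_mod_cast hp.1.one_le) (by norm_num)))
      calc ‖1 + f a‖ * ‖P - 1 - S‖ ≤ 1 * ((p:ℝ)^(-2:ℤ)) :=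
            mul_le_mul h1 ihs (norm_nonneg _) (by norm_num)
        _ = (p:ℝ)^(-2:ℤ) := one_mul _
    · rw [norm_mul, ← hsq]
      exact mul_le_mul hfa hS (norm_nonneg _) hnn

lemma fermat_norm {i : ℕ} (h1 : 1 ≤ i) (h2 : i < p) :
    ‖((i : ℚ_[p])^(p-1) - 1)‖ ≤ (p:ℝ)^(-1:ℤ) := by
  have hne : (i : ZMod p) ≠ 0 := by
    rw [Ne, ZMod.natCast_eq_zero_iff]
    exact fun hd => absurd (Nat.le_of_dvd (by omega) hd) (by omega)
  have hpow := ZMod.pow_card_sub_one_eq_one hne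
  have hdvd : (p:ℤ) ∣ (i:ℤ)^(p-1) - 1 := by
    rw [← ZMod.intCast_zmod_eq_zero_iff_dvd]
    push_cast
    rw [hpow]; ring
  have h := (Padic.norm_int_le_pow_iff_dvd (p := p) ((i:ℤ)^(p-1) - 1) 1).2 (by simpa using hdvd)
  have hc : (((i:ℤ)^(p-1) - 1 : ℤ) : ℚ_[p]) = (i : ℚ_[p])^(p-1) - 1 := by push_cast; ring
  rw [hc] at h
  simpa using h

lemma wilson_dvd : (p:ℤ) ∣ (Nat.factorial (p-1) : ℤ) + 1 := by
  rw [← ZMod.intCast_zmod_eq_zero_iff_dvd]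
  push_cast
  rw [ZMod.wilsons_lemma]; ring

variable {p : ℕ} [hp : Fact p.Prime]

lemma choose_id {j k : ℕ} (h : j ≤ k) :
    (k + 1 - j) * (k+1).choose j = (k+1) * k.choose j := by
  have h1 := Nat.add_one_mul_choose_eq k (k - j)
  have h2 : k.choose (k - j) = k.choose j := Nat.choose_symm h
  have h3 : (k+1).choose (k + 1 - j) = (k+1).choose j := Nat.choose_symm (by omega)
  have h4 : k - j + 1 = k + 1 - j := by omega
  rw [h2, h4, h3] at h1
  calc (k + 1 - j) * (k+1).choose j = (k+1).choose j * (k + 1 - j) := Nat.mul_comm _ _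
    _ = (k+1) * k.choose j := h1.symm

lemma sum_deficit (k : ℕ) (hk : 1 ≤ k) :
    (p:ℚ_[p]) * ((bernoulli k : ℚ) : ℚ_[p])
      = (∑ i ∈ range p, (i:ℚ_[p])^k)
        - ∑ j ∈ range k, ((bernoulli j : ℚ) : ℚ_[p]) * (k.choose j : ℚ_[p])
            * ((p:ℚ_[p])^(k+1-j) / ((k+1-j : ℕ) : ℚ_[p])) := by
  have hfa := sum_range_pow p k
  have hcast : (∑ i ∈ range p, (i:ℚ_[p])^k)
      = ∑ j ∈ range (k+1), ((bernoulli j : ℚ) : ℚ_[p]) * (((k+1).choose j : ℕ) : ℚ_[p])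
          * (p:ℚ_[p])^(k+1-j) / (((k+1 : ℕ)) : ℚ_[p]) := by
    have := congrArg (fun q : ℚ => (q : ℚ_[p])) hfa
    push_cast at this ⊢
    convert this using 2
  rw [hcast, sum_range_succ]
  have hk1 : (((k+1:ℕ)) : ℚ_[p]) ≠ 0 := Nat.cast_ne_zero.2 (by omega)
  have hlast : ((bernoulli k : ℚ) : ℚ_[p]) * (((k+1).choose k : ℕ) : ℚ_[p])
      * (p:ℚ_[p])^(k+1-k) / (((k+1:ℕ)) : ℚ_[p]) = (p:ℚ_[p]) * ((bernoulli k : ℚ) : ℚ_[p]) := by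
    rw [Nat.choose_succ_self_right]
    have : k + 1 - k = 1 := by omega
    rw [this, pow_one, div_eq_mul_inv]
    have hKi : (((k+1:ℕ)) : ℚ_[p]) * (((k+1:ℕ)) : ℚ_[p])⁻¹ = 1 := mul_inv_cancel₀ hk1
    linear_combination (((bernoulli k : ℚ) : ℚ_[p]) * (p:ℚ_[p])) * hKi
  rw [hlast]
  have hterm : ∀ j ∈ range k,
      ((bernoulli j : ℚ) : ℚ_[p]) * (((k+1).choose j : ℕ) : ℚ_[p])
          * (p:ℚ_[p])^(k+1-j) / (((k+1:ℕ)) : ℚ_[p])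
        = ((bernoulli j : ℚ) : ℚ_[p]) * (k.choose j : ℚ_[p])
            * ((p:ℚ_[p])^(k+1-j) / ((k+1-j : ℕ) : ℚ_[p])) := by
    intro j hj
    rw [mem_range] at hj
    have hm : (((k+1-j:ℕ)) : ℚ_[p]) ≠ 0 := Nat.cast_ne_zero.2 (by omega)
    have hid := choose_id (le_of_lt hj)
    have hidc : (((k+1-j:ℕ)) : ℚ_[p]) * (((k+1).choose j : ℕ) : ℚ_[p])
        = (((k+1:ℕ)) : ℚ_[p]) * ((k.choose j : ℕ) : ℚ_[p]) := by
      exact_mod_cast congrArg (fun m : ℕ => (m : ℚ_[p])) hid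
    have hCC : (((k+1).choose j : ℕ) : ℚ_[p]) / (((k+1:ℕ)) : ℚ_[p])
        = ((k.choose j : ℕ) : ℚ_[p]) / (((k+1-j:ℕ)) : ℚ_[p]) := by
      rw [div_eq_div_iff hk1 hm]
      linear_combination hidc
    rw [div_eq_mul_inv, div_eq_mul_inv] at hCC ⊢
    linear_combination (((bernoulli j : ℚ) : ℚ_[p]) * (p:ℚ_[p])^(k+1-j)) * hCC
  rw [sum_congr rfl hterm]
  ring

variable {p : ℕ} [hp : Fact p.Prime]

lemma sum_powers_norm_le (k : ℕ) : ‖∑ i ∈ range p, (i:ℚ_[p])^k‖ ≤ 1 :=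
  IsUltrametricDist.norm_sum_le_of_forall_le_of_nonneg zero_le_one
    (fun i _ => by rw [norm_pow]; exact pow_le_one₀ (norm_nonneg _) (pnat i))

lemma bern_norm_le (hp7 : 7 ≤ p) (k : ℕ) : ‖((bernoulli k : ℚ) : ℚ_[p])‖ ≤ (p : ℝ) := by
  have hppos : (0:ℝ) < (p:ℝ) := by exact_mod_cast hp.1.pos
  have hpne : (p:ℝ) ≠ 0 := ne_of_gt hppos
  have hp1 : (1:ℝ) ≤ (p:ℝ) := by exact_mod_cast hp.1.one_le
  induction k using Nat.strong_induction_on with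
  | _ k ih =>
    rcases Nat.eq_zero_or_pos k with rfl | hk
    · simpa using hp1
    · have hdef := sum_deficit (p := p) k hk
      have hterm : ∀ j ∈ range k,
          ‖((bernoulli j : ℚ) : ℚ_[p]) * (k.choose j : ℚ_[p])
            * ((p:ℚ_[p])^(k+1-j) / ((k+1-j : ℕ) : ℚ_[p]))‖ ≤ 1 := by
        intro j hj
        rw [mem_range] at hj
        have hm : 1 ≤ k + 1 - j := by omega
        have h2m : 2 ≤ k + 1 - j := by omega
        have hnd := norm_pow_div_le (p := p) (k+1-j) 2 hm h2m (by omega)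
        rw [norm_mul, norm_mul]
        have hb := ih j hj
        have hc := pnat (p := p) (k.choose j)
        calc ‖((bernoulli j : ℚ) : ℚ_[p])‖ * ‖(k.choose j : ℚ_[p])‖
              * ‖(p:ℚ_[p])^(k+1-j) / ((k+1-j : ℕ) : ℚ_[p])‖
            ≤ ((p:ℝ) * 1) * (p:ℝ)^(-(2:ℕ):ℤ) := by
              apply mul_le_mul _ hnd (norm_nonneg _) (by positivity)
              exact mul_le_mul hb hc (norm_nonneg _) (le_of_lt hppos)
          _ = (p:ℝ)^(-1:ℤ) := by
              have h := (zpow_add₀ hpne 1 (-2 : ℤ)).symm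
              norm_num at h ⊢
              exact h
          _ ≤ 1 := by
              apply zpow_le_one_of_nonpos₀ hp1 (by norm_num)
      have hsum : ‖∑ j ∈ range k, ((bernoulli j : ℚ) : ℚ_[p]) * (k.choose j : ℚ_[p])
            * ((p:ℚ_[p])^(k+1-j) / ((k+1-j : ℕ) : ℚ_[p]))‖ ≤ 1 :=
        IsUltrametricDist.norm_sum_le_of_forall_le_of_nonneg zero_le_one hterm
      have hfull : ‖(p:ℚ_[p]) * ((bernoulli k : ℚ) : ℚ_[p])‖ ≤ 1 := by
        rw [hdef]; exact psub (sum_powers_norm_le k) hsum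
      rw [norm_mul, Padic.norm_p] at hfull
      calc ‖((bernoulli k : ℚ) : ℚ_[p])‖
          = (p:ℝ) * ((p:ℝ)⁻¹ * ‖((bernoulli k : ℚ) : ℚ_[p])‖) := by
            field_simp
        _ ≤ (p:ℝ) * 1 := by
            apply mul_le_mul_of_nonneg_left hfull (le_of_lt hppos)
        _ = (p:ℝ) := mul_one _

lemma refined (hp7 : 7 ≤ p) (n : ℕ) (hn1 : 1 ≤ n) (hn5 : n ≤ 5) :
    ‖(∑ i ∈ range p, (i:ℚ_[p])^(n*(p-1)))
      - (p:ℚ_[p]) * ((bernoulli (n*(p-1)) : ℚ) : ℚ_[p])‖ ≤ (p:ℝ)^(-2:ℤ) := by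
  have hppos : (0:ℝ) < (p:ℝ) := by exact_mod_cast hp.1.pos
  have hpne : (p:ℝ) ≠ 0 := ne_of_gt hppos
  set k := n * (p - 1) with hkdef
  have hk6 : 6 ≤ k := by
    have : 6 ≤ p - 1 := by omega
    calc 6 = 1 * 6 := by norm_num
      _ ≤ n * (p - 1) := Nat.mul_le_mul hn1 this
  have hkeven : Even k := by
    have hodd : Odd p := hp.1.odd_of_ne_two (by omega)
    have : Even (p - 1) := Nat.Odd.sub_odd hodd odd_one
    exact this.mul_left n
  have hdef := sum_deficit (p := p) k (by omega)
  have hterm : ∀ j ∈ range k,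
      ‖((bernoulli j : ℚ) : ℚ_[p]) * (k.choose j : ℚ_[p])
        * ((p:ℚ_[p])^(k+1-j) / ((k+1-j : ℕ) : ℚ_[p]))‖ ≤ (p:ℝ)^(-2:ℤ) := by
    intro j hj
    rw [mem_range] at hj
    rcases eq_or_lt_of_le (Nat.lt_iff_add_one_le.1 hj) with hj1 | hj2
    · -- j = k - 1 : bernoulli j = 0
      have hjodd : Odd j := by
        have : j = k - 1 := by omega
        subst this
        exact Nat.Even.sub_odd (by omega) hkeven odd_one
      have hj1' : 1 < j := by omega
      have : bernoulli j = 0 := by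
        rw [bernoulli_eq_bernoulli'_of_ne_one (by omega)]
        exact bernoulli'_eq_zero_of_odd hjodd hj1'
      rw [this]
      simpa using le_of_lt (zpow_pos hppos _)
    · -- j ≤ k - 2, so m ≥ 3
      have hm : 1 ≤ k + 1 - j := by omega
      have h3m : 3 ≤ k + 1 - j := by omega
      have hnd := norm_pow_div_le (p := p) (k+1-j) 3 hm h3m (by omega)
      rw [norm_mul, norm_mul]
      have hb := bern_norm_le hp7 j
      have hc := pnat (p := p) (k.choose j)
      calc ‖((bernoulli j : ℚ) : ℚ_[p])‖ * ‖(k.choose j : ℚ_[p])‖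
            * ‖(p:ℚ_[p])^(k+1-j) / ((k+1-j : ℕ) : ℚ_[p])‖
          ≤ ((p:ℝ) * 1) * (p:ℝ)^(-(3:ℕ):ℤ) := by
            apply mul_le_mul _ hnd (norm_nonneg _) (by positivity)
            exact mul_le_mul hb hc (norm_nonneg _) (le_of_lt hppos)
        _ = (p:ℝ)^(-2:ℤ) := by
            have h := (zpow_add₀ hpne 1 (-3 : ℤ)).symm
            norm_num at h ⊢
            exact h
  have hsum := IsUltrametricDist.norm_sum_le_of_forall_le_of_nonneg
    (le_of_lt (zpow_pos hppos (-2:ℤ))) hterm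
  have : (∑ i ∈ range p, (i:ℚ_[p])^k) - (p:ℚ_[p]) * ((bernoulli k : ℚ) : ℚ_[p])
      = ∑ j ∈ range k, ((bernoulli j : ℚ) : ℚ_[p]) * (k.choose j : ℚ_[p])
          * ((p:ℚ_[p])^(k+1-j) / ((k+1-j : ℕ) : ℚ_[p])) := by
    rw [hdef]; ring
  rw [this]
  exact hsum

variable {p : ℕ} [hp : Fact p.Prime]

lemma zsq : (((p:ℝ))^(-1:ℤ))^2 = (p:ℝ)^(-2:ℤ) := by
  rw [← zpow_natCast ((p:ℝ)^(-1:ℤ)) 2, ← zpow_mul]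
  norm_num

lemma zmul : ((p:ℝ))^(-1:ℤ) * ((p:ℝ))^(-1:ℤ) = (p:ℝ)^(-2:ℤ) := by
  have hppos : (0:ℝ) < (p:ℝ) := by exact_mod_cast hp.1.pos
  rw [← zpow_add₀ (ne_of_gt hppos)]
  norm_num

lemma pinv_le_one : ((p:ℝ))^(-1:ℤ) ≤ 1 :=
  zpow_le_one_of_nonpos₀ (by exact_mod_cast hp.1.one_le) (by norm_num)

lemma hFnorm (hp2 : 2 ≤ p) :
    ‖∑ i ∈ Ico 1 p, ((i:ℚ_[p])^(p-1) - 1)‖ ≤ (p:ℝ)^(-1:ℤ) := by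
  have hppos : (0:ℝ) < (p:ℝ) := by exact_mod_cast hp.1.pos
  exact IsUltrametricDist.norm_sum_le_of_forall_le_of_nonneg
    (le_of_lt (zpow_pos hppos _))
    (fun i hi => by
      rw [mem_Ico] at hi
      exact fermat_norm hi.1 hi.2)

lemma S_F (hp7 : 7 ≤ p) (n : ℕ) (hn1 : 1 ≤ n) :
    ‖(∑ i ∈ range p, (i:ℚ_[p])^(n*(p-1)))
        - (((p-1 : ℕ)) : ℚ_[p])
        - (n : ℚ_[p]) * (∑ i ∈ Ico 1 p, ((i:ℚ_[p])^(p-1) - 1))‖ ≤ (p:ℝ)^(-2:ℤ) := by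
  have hppos : (0:ℝ) < (p:ℝ) := by exact_mod_cast hp.1.pos
  have hp0 : 0 < p := by omega
  have h0 : (∑ i ∈ range p, (i:ℚ_[p])^(n*(p-1))) = ∑ i ∈ Ico 1 p, (i:ℚ_[p])^(n*(p-1)) := by
    rw [range_eq_Ico, Finset.sum_eq_sum_Ico_succ_bot hp0]
    have : ((0:ℕ):ℚ_[p])^(n*(p-1)) = 0 := by
      rw [Nat.cast_zero]
      exact zero_pow (Nat.mul_ne_zero (by omega) (by omega))
    rw [this, zero_add]
  rw [h0]
  have h1 : (((p-1 : ℕ)) : ℚ_[p]) = ∑ _i ∈ Ico 1 p, (1:ℚ_[p]) := by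
    rw [Finset.sum_const, Nat.card_Ico, nsmul_eq_mul, mul_one]
  have h2 : (n : ℚ_[p]) * (∑ i ∈ Ico 1 p, ((i:ℚ_[p])^(p-1) - 1))
      = ∑ i ∈ Ico 1 p, (n:ℚ_[p]) * ((i:ℚ_[p])^(p-1) - 1) := Finset.mul_sum _ _ _
  rw [h1, h2, ← Finset.sum_sub_distrib, ← Finset.sum_sub_distrib]
  apply IsUltrametricDist.norm_sum_le_of_forall_le_of_nonneg (le_of_lt (zpow_pos hppos _))
  intro i hi
  rw [mem_Ico] at hi
  have hf : ‖(i:ℚ_[p])^(p-1) - 1‖ ≤ (p:ℝ)^(-1:ℤ) := fermat_norm hi.1 hi.2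
  have hf1 : ‖(i:ℚ_[p])^(p-1) - 1‖ ≤ 1 := hf.trans pinv_le_one
  have hb := binom (p := p) n hf1
  have hpow : (i:ℚ_[p])^(n*(p-1)) = (1 + ((i:ℚ_[p])^(p-1) - 1))^n := by
    rw [add_sub_cancel, ← pow_mul, Nat.mul_comm]
  rw [hpow]
  refine hb.trans ?_
  calc ‖(i:ℚ_[p])^(p-1) - 1‖^2 ≤ ((p:ℝ)^(-1:ℤ))^2 :=
        pow_le_pow_left₀ (norm_nonneg _) hf 2
    _ = (p:ℝ)^(-2:ℤ) := zsq

lemma wilson_norm : ‖(((Nat.factorial (p-1) : ℕ)):ℚ_[p]) + 1‖ ≤ (p:ℝ)^(-1:ℤ) := by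
  have h := (Padic.norm_int_le_pow_iff_dvd (p := p)
    ((Nat.factorial (p-1) : ℤ) + 1) 1).2 (by simpa using wilson_dvd (p := p))
  have hc : (((Nat.factorial (p-1) : ℤ) + 1 : ℤ) : ℚ_[p])
      = (((Nat.factorial (p-1) : ℕ)):ℚ_[p]) + 1 := by push_cast; ring
  rw [hc] at h
  simpa using h

lemma lerch (hp7 : 7 ≤ p) :
    ‖((((Nat.factorial (p-1) : ℕ)):ℚ_[p]) + 1)
        - (∑ i ∈ Ico 1 p, ((i:ℚ_[p])^(p-1) - 1))‖ ≤ (p:ℝ)^(-2:ℤ) := by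
  have hppos : (0:ℝ) < (p:ℝ) := by exact_mod_cast hp.1.pos
  set N : ℚ_[p] := (((Nat.factorial (p-1) : ℕ)):ℚ_[p]) + 1 with hN
  set F : ℚ_[p] := ∑ i ∈ Ico 1 p, ((i:ℚ_[p])^(p-1) - 1) with hF
  have hNnorm : ‖N‖ ≤ (p:ℝ)^(-1:ℤ) := wilson_norm
  have hN1 : ‖N‖ ≤ 1 := hNnorm.trans pinv_le_one
  have hprod := prod_approx (Ico 1 p) (fun i => (i:ℚ_[p])^(p-1) - 1)
    (fun i hi => by rw [mem_Ico] at hi; exact fermat_norm hi.1 hi.2)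
  have hprod1 : (∏ i ∈ Ico 1 p, (1 + ((i:ℚ_[p])^(p-1) - 1)))
      = (1 - N)^(p-1) := by
    have e1 : ∀ i ∈ Ico 1 p, 1 + ((i:ℚ_[p])^(p-1) - 1) = (i:ℚ_[p])^(p-1) :=
      fun i _ => by ring
    rw [Finset.prod_congr rfl e1, Finset.prod_pow]
    have e2 : (∏ i ∈ Ico 1 p, (i:ℚ_[p])) = (((Nat.factorial (p-1) : ℕ)):ℚ_[p]) := by
      rw [← Nat.cast_prod]
      congr 1
      have hpp : p = (p - 1) + 1 := by omega
      rw [hpp]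
      exact Finset.prod_Ico_id_eq_factorial (p-1)
    rw [e2]
    have e3 : (((Nat.factorial (p-1) : ℕ)):ℚ_[p]) = -(1 - N) := by rw [hN]; ring
    rw [e3]
    apply Even.neg_pow
    have hodd : Odd p := hp.1.odd_of_ne_two (by omega)
    exact Nat.Odd.sub_odd hodd odd_one
  rw [hprod1] at hprod
  have hbin := binom (p := p) (p-1) (f := -N) (by rwa [norm_neg])
  have hsq : ‖-N‖^2 ≤ (p:ℝ)^(-2:ℤ) := by
    rw [norm_neg, ← zsq (p := p)]
    exact pow_le_pow_left₀ (norm_nonneg _) hNnorm 2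
  have hcast : ((p-1:ℕ) : ℚ_[p]) = (p:ℚ_[p]) - 1 := by
    have hpp : 1 ≤ p := by omega
    push_cast [Nat.cast_sub hpp]
    ring
  have hb2 : ‖(1 - N)^(p-1) - 1 - N + (p:ℚ_[p]) * N‖ ≤ (p:ℝ)^(-2:ℤ) := by
    have e : (1 - N)^(p-1) - 1 - N + (p:ℚ_[p]) * N
        = (1 + (-N))^(p-1) - 1 - ((p-1:ℕ) : ℚ_[p]) * (-N) := by
      rw [hcast]; ring
    rw [e]
    exact hbin.trans hsq
  have hpN : ‖(p:ℚ_[p]) * N‖ ≤ (p:ℝ)^(-2:ℤ) := by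
    rw [norm_mul, Padic.norm_p, ← zmul (p := p), ← zpow_neg_one]
    exact mul_le_mul_of_nonneg_left hNnorm (by positivity)
  have hgoal : N - F = ((1 - N)^(p-1) - 1 - F)
      - ((1 - N)^(p-1) - 1 - N + (p:ℚ_[p]) * N) + (p:ℚ_[p]) * N := by ring
  rw [hgoal]
  exact padd (psub hprod hb2) hpN
end WQBC
open Finset WQBC

theorem wilson_quotient_bernoulli_congruence (p : ℕ) [hp : Fact p.Prime] (hp7 : 7 ≤ p)
    (B : ℕ → ℚ)
    (hB : ∀ n, B n = (bernoulli (n * (p - 1)) + 1 / p - 1) / (n * (p - 1))) :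
    ‖(((((Nat.factorial (p - 1) : ℚ) + 1) / p
        - (-5 * B 1 + 10 * B 2 - 10 * B 3 + 5 * B 4 - B 5)) : ℚ) : ℚ_[p])‖
      ≤ (p : ℝ) ^ (-1 : ℤ) := by
  have hppos : (0:ℝ) < (p:ℝ) := by exact_mod_cast hp.1.pos
  have hpreal : ((p:ℝ)) ≠ 0 := ne_of_gt hppos
  have hpne : ((p:ℚ_[p])) ≠ 0 := Nat.cast_ne_zero.2 (by omega)
  have hc : (((p-1:ℕ)) : ℚ_[p]) = (p:ℚ_[p]) - 1 := by
    push_cast [Nat.cast_sub (by omega : 1 ≤ p)]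
    ring
  have hpm1 : ((p:ℚ_[p]) - 1) ≠ 0 := by
    rw [← hc]
    exact Nat.cast_ne_zero.2 (by omega)
  -- main objects
  set F : ℚ_[p] := ∑ i ∈ Ico 1 p, ((i:ℚ_[p])^(p-1) - 1) with hFdef
  set N : ℚ_[p] := (((Nat.factorial (p-1) : ℕ)):ℚ_[p]) + 1 with hNdef
  set W : ℚ_[p] := N / (p:ℚ_[p]) with hWdef
  have hpW : (p:ℚ_[p]) * W = N := by rw [hWdef]; field_simp
  set bn : ℕ → ℚ_[p] := fun n => ((B n : ℚ) : ℚ_[p]) with hbndef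
  set kq : ℕ → ℚ_[p] := fun n => (n:ℚ_[p]) * ((p:ℚ_[p]) - 1) with hkqdef
  have hkq_ne : ∀ n : ℕ, 1 ≤ n → (kq n) ≠ 0 := fun n hn =>
    mul_ne_zero (Nat.cast_ne_zero.2 (by omega)) hpm1
  have hkq_norm : ∀ n : ℕ, 1 ≤ n → n ≤ 5 → ‖kq n‖ = 1 := by
    intro n h1 h5
    have hcast : kq n = (((n * (p-1) : ℕ)) : ℚ_[p]) := by
      rw [hkqdef]
      push_cast [Nat.cast_sub (by omega : 1 ≤ p)]
      ring
    rw [hcast]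
    apply pnat_eq_one
    intro hdvd
    rcases (Nat.Prime.dvd_mul hp.1).1 hdvd with h | h
    · exact absurd (Nat.le_of_dvd (by omega) h) (by omega)
    · exact absurd (Nat.le_of_dvd (by omega) h) (by omega)
  have hbn : ∀ n : ℕ, bn n
      = (((bernoulli (n*(p-1)) : ℚ) : ℚ_[p]) + 1/(p:ℚ_[p]) - 1) / kq n := by
    intro n
    rw [hbndef]
    simp only
    rw [hB n, hkqdef]
    push_cast
    ring
  -- key congruence for each n
  have hediff : ∀ n : ℕ, 1 ≤ n → n ≤ 5 →
      ‖(p:ℚ_[p]) * bn n * kq n - (n:ℚ_[p]) * F‖ ≤ (p:ℝ)^(-2:ℤ) := by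
    intro n h1 h5
    have hpbk : (p:ℚ_[p]) * bn n * kq n
        = (p:ℚ_[p]) * ((bernoulli (n*(p-1)) : ℚ) : ℚ_[p]) + 1 - (p:ℚ_[p]) := by
      rw [hbn n]
      field_simp [hkq_ne n h1]
    have hr := refined (p := p) hp7 n h1 h5
    have hs := S_F (p := p) hp7 n h1
    rw [hc] at hs
    rw [← hFdef] at hs
    have e : (p:ℚ_[p]) * bn n * kq n - (n:ℚ_[p]) * F
        = (-((∑ i ∈ range p, (i:ℚ_[p])^(n*(p-1)))
              - (p:ℚ_[p]) * ((bernoulli (n*(p-1)) : ℚ) : ℚ_[p])))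
          + ((∑ i ∈ range p, (i:ℚ_[p])^(n*(p-1))) - ((p:ℚ_[p]) - 1) - (n:ℚ_[p]) * F) := by
      rw [hpbk]; ring
    rw [e]
    exact padd (by rwa [norm_neg]) hs
  have hterm : ∀ n : ℕ, 1 ≤ n → n ≤ 5 →
      ‖((p:ℚ_[p]) * bn n * kq n - (n:ℚ_[p]) * F) / kq n‖ ≤ (p:ℝ)^(-2:ℤ) := by
    intro n h1 h5
    rw [norm_div, hkq_norm n h1 h5, div_one]
    exact hediff n h1 h5
  -- the X combination
  set X : ℚ_[p] := -5 * bn 1 + 10 * bn 2 - 10 * bn 3 + 5 * bn 4 - bn 5 with hXdef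
  have hT : ∀ n : ℕ, 1 ≤ n → ((p:ℚ_[p]) * bn n * kq n - (n:ℚ_[p]) * F) / kq n
      = (p:ℚ_[p]) * bn n - F / ((p:ℚ_[p]) - 1) := by
    intro n h1
    have hn0 : ((n:ℚ_[p])) ≠ 0 := Nat.cast_ne_zero.2 (by omega)
    rw [hkqdef]
    simp only
    field_simp
  have hidentity : (p:ℚ_[p]) * W - (p:ℚ_[p]) * X
      = ((N - F) + F * (p:ℚ_[p]) / ((p:ℚ_[p]) - 1))
        + (((5:ℕ):ℚ_[p]) * (((p:ℚ_[p]) * bn 1 * kq 1 - ((1:ℕ):ℚ_[p]) * F) / kq 1)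
          - ((10:ℕ):ℚ_[p]) * (((p:ℚ_[p]) * bn 2 * kq 2 - ((2:ℕ):ℚ_[p]) * F) / kq 2)
          + ((10:ℕ):ℚ_[p]) * (((p:ℚ_[p]) * bn 3 * kq 3 - ((3:ℕ):ℚ_[p]) * F) / kq 3)
          - ((5:ℕ):ℚ_[p]) * (((p:ℚ_[p]) * bn 4 * kq 4 - ((4:ℕ):ℚ_[p]) * F) / kq 4)
          + (((p:ℚ_[p]) * bn 5 * kq 5 - ((5:ℕ):ℚ_[p]) * F) / kq 5)) := by
    rw [hT 1 (by norm_num), hT 2 (by norm_num), hT 3 (by norm_num), hT 4 (by norm_num),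
      hT 5 (by norm_num), hpW, hXdef]
    push_cast
    field_simp
    ring
  have hFp : ‖F * (p:ℚ_[p]) / ((p:ℚ_[p]) - 1)‖ ≤ (p:ℝ)^(-2:ℤ) := by
    rw [norm_div, norm_mul, ← hc, Padic.norm_p, pnat_eq_one (p := p) (n := p - 1) (by
      intro hdvd
      exact absurd (Nat.le_of_dvd (by omega) hdvd) (by omega)), div_one,
      ← zmul (p := p), ← zpow_neg_one]
    exact mul_le_mul_of_nonneg_right (hFnorm (by omega)) (by positivity)
  have hnum : ∀ (m : ℕ) (x : ℚ_[p]) (c : ℝ), ‖x‖ ≤ c → ‖(m:ℚ_[p]) * x‖ ≤ c := by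
    intro m x c hx
    rw [norm_mul]
    calc ‖(m:ℚ_[p])‖ * ‖x‖ ≤ 1 * c :=
          mul_le_mul (pnat m) hx (norm_nonneg _) zero_le_one
      _ = c := one_mul _
  have H2 : ‖(p:ℚ_[p]) * W - (p:ℚ_[p]) * X‖ ≤ (p:ℝ)^(-2:ℤ) := by
    rw [hidentity]
    have hL := lerch (p := p) hp7
    rw [← hFdef, ← hNdef] at hL
    have t1 := hterm 1 (by norm_num) (by norm_num)
    have t2 := hterm 2 (by norm_num) (by norm_num)
    have t3 := hterm 3 (by norm_num) (by norm_num)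
    have t4 := hterm 4 (by norm_num) (by norm_num)
    have t5 := hterm 5 (by norm_num) (by norm_num)
    exact padd (padd hL hFp)
      (padd (psub (padd (psub (hnum 5 _ _ t1) (hnum 10 _ _ t2)) (hnum 10 _ _ t3))
        (hnum 5 _ _ t4)) t5)
  -- convert to the stated goal
  have hgoalcast : (((((Nat.factorial (p - 1) : ℚ) + 1) / p
        - (-5 * B 1 + 10 * B 2 - 10 * B 3 + 5 * B 4 - B 5)) : ℚ) : ℚ_[p]) = W - X := by
    rw [hWdef, hNdef, hXdef, hbndef]
    push_cast
    ring
  rw [hgoalcast]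
  have hnormmul : ‖(p:ℚ_[p]) * W - (p:ℚ_[p]) * X‖ = (p:ℝ)⁻¹ * ‖W - X‖ := by
    rw [← mul_sub, norm_mul, Padic.norm_p]
  rw [hnormmul] at H2
  have harith : (p:ℝ) * (p:ℝ)^(-2:ℤ) = (p:ℝ)^(-1:ℤ) := by
    have h := (zpow_add₀ hpreal 1 (-2 : ℤ)).symm
    norm_num at h ⊢
    exact h
  calc ‖W - X‖ = (p:ℝ) * ((p:ℝ)⁻¹ * ‖W - X‖) := by field_simp
    _ ≤ (p:ℝ) * (p:ℝ)^(-2:ℤ) := mul_le_mul_of_nonneg_left H2 (le_of_lt hppos)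
    _ = (p:ℝ)^(-1:ℤ) := harith
end

section
/- Let p ≥ 7 be a prime. Then (p-1)! ≡ -1 + ω_1 p (mod p²), where ω_1 ≡ -B̄_1 (mod p) and B̄_1 = (B_{p-1} + 1/p - 1)/(p-1). Equivalently, (p-1)! ≡ -1 - p·B̄_1 (mod p²). -/
open Finset

section GlaisherAux

lemma gl_prod_one_add (P : ℕ) : ∀ (s : Finset ℕ) (g : ℕ → ℤ), (∀ i ∈ s, (P:ℤ) ∣ g i - 1) →
    (P:ℤ)^2 ∣ (∏ i ∈ s, g i) - (1 + ∑ i ∈ s, (g i - 1)) := by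
  intro s
  induction s using Finset.induction_on with
  | empty => simp
  | @insert a s ha ih =>
    intro g hg
    rw [Finset.prod_insert ha, Finset.sum_insert ha]
    have h1 := ih g (fun i hi => hg i (Finset.mem_insert_of_mem hi))
    obtain ⟨x, hx⟩ := hg a (Finset.mem_insert_self a s)
    obtain ⟨y, hy⟩ := Finset.dvd_sum (fun i hi => hg i (Finset.mem_insert_of_mem hi))
    have key : g a * ∏ i ∈ s, g i - (1 + (g a - 1 + ∑ i ∈ s, (g i - 1)))
        = g a * ((∏ i ∈ s, g i) - (1 + ∑ i ∈ s, (g i - 1))) + (g a - 1) * ∑ i ∈ s, (g i - 1) := by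
      ring
    rw [key]
    exact dvd_add (Dvd.dvd.mul_left h1 _) ⟨x*y, by rw [hx, hy]; ring⟩

variable (p : ℕ) [hp : Fact p.Prime]

lemma gl_norm_nat_eq_one {m : ℕ} (h : ¬ p ∣ m) : ‖(m : ℚ_[p])‖ = 1 := by
  have h1 : ‖((m : ℤ) : ℚ_[p])‖ ≤ 1 := Padic.norm_int_le_one _
  have h2 : ¬ ‖((m : ℤ) : ℚ_[p])‖ < 1 := by
    rw [Padic.norm_intCast_lt_one_iff]
    exact_mod_cast h
  push_cast at h1 h2
  exact le_antisymm h1 (not_lt.mp h2)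

lemma gl_bern_norm_le_one : ∀ n : ℕ, n + 1 < p → ‖((bernoulli n : ℚ) : ℚ_[p])‖ ≤ 1 := by
  intro n
  induction n using Nat.strong_induction_on with
  | _ n ih =>
    intro hn
    rcases Nat.eq_zero_or_pos n with h0 | h1
    · subst h0; simp
    · have hs := sum_bernoulli (n + 1)
      rw [if_neg (by omega), Finset.sum_range_succ, Nat.choose_succ_self_right] at hs
      have key : ((n + 1 : ℕ) : ℚ) * bernoulli n
          = -∑ k ∈ range n, ((n + 1).choose k : ℚ) * bernoulli k := by
        push_cast at hs ⊢
        linarith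
      have hnd : ¬ p ∣ (n + 1) := Nat.not_dvd_of_pos_of_lt (by omega) hn
      have h1 : ‖(((n + 1 : ℕ) : ℚ) : ℚ_[p])‖ = 1 := by
        rw [show (((n + 1 : ℕ) : ℚ) : ℚ_[p]) = ((n + 1 : ℕ) : ℚ_[p]) by push_cast; ring]
        exact gl_norm_nat_eq_one p hnd
      calc ‖((bernoulli n : ℚ) : ℚ_[p])‖
          = ‖(((n + 1 : ℕ) : ℚ) : ℚ_[p])‖ * ‖((bernoulli n : ℚ) : ℚ_[p])‖ := by
            rw [h1, one_mul]
        _ = ‖(((((n:ℕ) + 1 : ℕ) : ℚ) * bernoulli n : ℚ) : ℚ_[p])‖ := by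
            rw [Rat.cast_mul, norm_mul]
        _ = ‖((∑ k ∈ range n, ((n + 1).choose k : ℚ) * bernoulli k : ℚ) : ℚ_[p])‖ := by
            rw [key, Rat.cast_neg, norm_neg]
        _ ≤ 1 := by
            rw [Rat.cast_sum]
            apply IsUltrametricDist.norm_sum_le_of_forall_le_of_nonneg zero_le_one
            intro i hi
            rw [Rat.cast_mul, norm_mul]
            have hc : ‖((((n + 1).choose i : ℕ) : ℚ) : ℚ_[p])‖ ≤ 1 := by
              rw [show ((((n + 1).choose i : ℕ) : ℚ) : ℚ_[p]) = (((n + 1).choose i : ℤ) : ℚ_[p])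
                by push_cast; ring]
              exact Padic.norm_int_le_one _
            have hb : ‖((bernoulli i : ℚ) : ℚ_[p])‖ ≤ 1 := by
              have := Finset.mem_range.mp hi
              exact ih i this (by omega)
            calc ‖((((n + 1).choose i : ℕ) : ℚ) : ℚ_[p])‖ * ‖((bernoulli i : ℚ) : ℚ_[p])‖
                ≤ 1 * 1 := mul_le_mul hc hb (norm_nonneg _) zero_le_one
              _ = 1 := one_mul 1

lemma gl_ppow_anti {a b : ℕ} (hab : b ≤ a) : (p : ℝ) ^ (-(a:ℤ)) ≤ (p : ℝ) ^ (-(b:ℤ)) := by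
  have hp1 : (1:ℝ) < p := by exact_mod_cast hp.out.one_lt
  apply zpow_le_zpow_right₀ hp1.le
  omega

lemma gl_bound3 {x y z : ℚ_[p]} {a b : ℕ} (hx : ‖x‖ ≤ 1)
    (hy : ‖y‖ ≤ (p:ℝ)^(-(a:ℤ))) (hz : ‖z‖ ≤ (p:ℝ)^(-(b:ℤ))) (hab : 2 ≤ a + b) :
    ‖x * y * z‖ ≤ (p:ℝ)^(-2:ℤ) := by
  have h0 : (0:ℝ) < p := by exact_mod_cast hp.out.pos
  rw [norm_mul, norm_mul]
  calc ‖x‖ * ‖y‖ * ‖z‖ ≤ 1 * ((p:ℝ)^(-(a:ℤ))) * ((p:ℝ)^(-(b:ℤ))) := by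
        apply mul_le_mul (mul_le_mul hx hy (norm_nonneg _) zero_le_one) hz (norm_nonneg _)
        positivity
    _ = (p:ℝ)^(-((a+b:ℕ):ℤ)) := by
        rw [one_mul, ← zpow_add₀ (ne_of_gt h0)]; push_cast; ring_nf
    _ ≤ (p:ℝ)^(-((2:ℕ):ℤ)) := gl_ppow_anti p hab
    _ = (p:ℝ)^(-2:ℤ) := by norm_num

lemma gl_faulhaber_tail (hp7 : 7 ≤ p) :
    ‖((((∑ k ∈ range p, (k:ℚ) ^ (p-1)) - (p:ℚ) * bernoulli (p-1)) : ℚ) : ℚ_[p])‖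
      ≤ (p : ℝ) ^ (-2 : ℤ) := by
  obtain ⟨q, rfl⟩ : ∃ q, p = q + 1 := ⟨p - 1, by omega⟩
  have hq6 : 6 ≤ q := by omega
  have hQ0 : ((q:ℚ) + 1) ≠ 0 := by positivity
  simp only [Nat.add_sub_cancel]
  rw [sum_range_pow (q+1) q, Finset.sum_range_succ]
  have hlast : bernoulli q * (((q+1).choose q : ℕ) : ℚ) * (((q+1:ℕ)):ℚ)^(q+1-q) / ((q:ℚ)+1)
      = ((q+1:ℕ) : ℚ) * bernoulli q := by
    rw [Nat.choose_succ_self_right, show q+1-q = 1 from by omega, pow_one]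
    push_cast
    field_simp
  rw [hlast, add_sub_cancel_right, Rat.cast_sum]
  apply IsUltrametricDist.norm_sum_le_of_forall_le_of_nonneg (by positivity)
  intro i hi
  have hiq : i < q := Finset.mem_range.mp hi
  have hterm : bernoulli i * (((q+1).choose i : ℕ) : ℚ) * (((q+1:ℕ)):ℚ)^(q+1-i) / ((q:ℚ)+1)
      = bernoulli i * (((q+1).choose i : ℕ) : ℚ) * (((q+1:ℕ)):ℚ)^(q-i) := by
    rw [show q+1-i = (q-i)+1 from by omega, pow_succ]
    push_cast
    field_simp
  rw [hterm]
  have hcast : ((bernoulli i * (((q+1).choose i : ℕ) : ℚ) * (((q+1:ℕ)):ℚ)^(q-i) : ℚ) : ℚ_[q+1])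
      = ((bernoulli i : ℚ) : ℚ_[q+1]) * ((((q+1).choose i : ℕ) : ℤ) : ℚ_[q+1])
        * (((q+1 : ℕ)) : ℚ_[q+1])^(q-i) := by
    push_cast; ring
  rw [hcast]
  have hbz : ‖((bernoulli i : ℚ) : ℚ_[q+1])‖ ≤ 1 := gl_bern_norm_le_one (q+1) i (by omega)
  have hpow : ‖(((q+1:ℕ)) : ℚ_[q+1])^(q-i)‖ ≤ ((q+1:ℕ):ℝ)^(-((q-i:ℕ)):ℤ) :=
    le_of_eq (Padic.norm_p_pow (q-i))
  rcases Nat.eq_zero_or_pos i with h0 | h1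
  · subst h0
    have hch : ‖((((q+1).choose 0 : ℕ) : ℤ) : ℚ_[q+1])‖ ≤ (((q+1:ℕ)):ℝ)^(-((0:ℕ)):ℤ) := by
      simpa using Padic.norm_int_le_one ((((q+1).choose 0 : ℕ) : ℤ) : ℤ)
    exact gl_bound3 (q+1) hbz hch hpow (by omega)
  · have hdvd : ((q+1:ℕ)^1 : ℤ) ∣ (((q+1).choose i : ℕ) : ℤ) := by
      rw [pow_one]
      exact_mod_cast Nat.Prime.dvd_choose_self hp.out (by omega) (by omega)
    have hch : ‖((((q+1).choose i : ℕ) : ℤ) : ℚ_[q+1])‖ ≤ (((q+1:ℕ)):ℝ)^(-((1:ℕ)):ℤ) :=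
      (Padic.norm_int_le_pow_iff_dvd _ _).mpr hdvd
    exact gl_bound3 (q+1) hbz hch hpow (by omega)

lemma gl_key_int (hp7 : 7 ≤ p) :
    ((p:ℤ))^2 ∣ ((p:ℤ) - 1) * ((Nat.factorial (p-1) : ℤ) + 1)
      + (∑ k ∈ range p, (k:ℤ)^(p-1)) + 1 - p := by
  set F : ℤ := (Nat.factorial (p-1) : ℤ) with hF
  set T : ℤ := ∑ k ∈ range p, (k:ℤ)^(p-1) with hT
  have hodd : Odd p := hp.out.odd_of_ne_two (by omega)
  have hw : (p:ℤ) ∣ F + 1 := by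
    have h1 : ((F + 1 : ℤ) : ZMod p) = 0 := by
      rw [hF]
      push_cast
      rw [ZMod.wilsons_lemma]
      ring
    exact_mod_cast (ZMod.intCast_zmod_eq_zero_iff_dvd _ _).mp h1
  have hd : (p:ℤ)^2 ∣ F^p + 1 := by
    have h := dvd_sub_pow_of_dvd_sub (R := ℤ) (p := p) (a := F) (b := -1)
      (by simpa [sub_neg_eq_add] using hw) 1
    norm_num at h
    rwa [hodd.neg_one_pow, sub_neg_eq_add] at h
  obtain ⟨w, hw'⟩ := hw
  have hferm : ∀ k ∈ Finset.Ico 1 p, (p:ℤ) ∣ (k:ℤ)^(p-1) - 1 := by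
    intro k hk
    rw [Finset.mem_Ico] at hk
    have hk0 : ((k:ℕ) : ZMod p) ≠ 0 := by
      rw [Ne, ZMod.natCast_eq_zero_iff]
      exact Nat.not_dvd_of_pos_of_lt (by omega) hk.2
    have h1 : (((k:ℤ)^(p-1) - 1 : ℤ) : ZMod p) = 0 := by
      push_cast
      rw [ZMod.pow_card_sub_one_eq_one hk0]
      ring
    exact_mod_cast (ZMod.intCast_zmod_eq_zero_iff_dvd _ _).mp h1
  have hprod := gl_prod_one_add p (Finset.Ico 1 p) (fun k => (k:ℤ)^(p-1)) hferm
  have h2 : ∑ k ∈ Finset.Ico 1 p, (k:ℤ)^(p-1) = T := by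
    rw [hT, Finset.range_eq_Ico,
      Finset.sum_eq_sum_Ico_succ_bot (show 0 < p by omega) (fun k => (k:ℤ)^(p-1))]
    norm_num [zero_pow (show p-1 ≠ 0 by omega)]
  have hTsum : ∑ k ∈ Finset.Ico 1 p, ((k:ℤ)^(p-1) - 1) = T - ((p:ℤ) - 1) := by
    rw [Finset.sum_sub_distrib, h2, Finset.sum_const, Nat.card_Ico, nsmul_eq_mul, mul_one]
    have hc : ((p - 1 : ℕ) : ℤ) = (p:ℤ) - 1 := by
      push_cast [Nat.cast_sub (show 1 ≤ p by omega)]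
      ring
    rw [hc]
  have hFprod : ∏ k ∈ Finset.Ico 1 p, (k:ℤ) = F := by
    have hpi : ∏ k ∈ Finset.Ico 1 p, k = Nat.factorial (p-1) := by
      have h3 := Finset.prod_Ico_id_eq_factorial (p-1)
      rwa [show p-1+1 = p from by omega] at h3
    rw [hF, ← Nat.cast_prod, hpi]
  have hFp : F^p = F * ∏ k ∈ Finset.Ico 1 p, (k:ℤ)^(p-1) := by
    rw [← hFprod, ← Finset.prod_pow, ← Finset.prod_mul_distrib]
    apply Finset.prod_congr rfl
    intro k _
    rw [← pow_succ']
    congr 1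
    omega
  rw [hTsum] at hprod
  have hG : (p:ℤ)^2 ∣ F * (1 + (T - ((p:ℤ)-1))) + 1 := by
    have h1 : (p:ℤ)^2 ∣ F^p - F * (1 + (T - ((p:ℤ)-1))) := by
      have h4 := Dvd.dvd.mul_left hprod F
      rwa [mul_sub, ← hFp] at h4
    have h5 := dvd_sub hd h1
    have heq : F^p + 1 - (F^p - F * (1 + (T - ((p:ℤ)-1))))
        = F * (1 + (T - ((p:ℤ)-1))) + 1 := by ring
    rwa [heq] at h5
  have hcop : IsCoprime ((p:ℤ)^2) F := by
    apply IsCoprime.pow_left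
    rw [hF, Nat.isCoprime_iff_coprime]
    exact (Nat.Prime.coprime_iff_not_dvd hp.out).mpr
      (fun hdvd => by have := (Nat.Prime.dvd_factorial hp.out).mp hdvd; omega)
  apply hcop.dvd_of_dvd_mul_left
  have hkey : F * (((p:ℤ) - 1) * (F + 1) + T + 1 - p)
      = (F * (1 + (T - ((p:ℤ)-1))) + 1) + (p:ℤ)^2 * (F*w - w^2) := by
    have hF' : F = (p:ℤ)*w - 1 := by linarith [hw']
    rw [hF']
    ring
  rw [hkey]
  exact dvd_add hG (dvd_mul_right _ _)

end GlaisherAux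

theorem glaisher_congruence (p : ℕ) [hp : Fact p.Prime] (hp7 : 7 ≤ p) :
    ‖((((Nat.factorial (p - 1) : ℚ) + 1
        + (p : ℚ) * ((bernoulli (p - 1) + 1 / p - 1) / (p - 1))) : ℚ) : ℚ_[p])‖
      ≤ (p : ℝ) ^ (-2 : ℤ) := by
  have hp0 : (p:ℚ) ≠ 0 := Nat.cast_ne_zero.mpr (by omega)
  have hpm1 : ((p:ℚ) - 1) ≠ 0 := by
    have : (7:ℚ) ≤ (p:ℚ) := by exact_mod_cast hp7
    linarith
  have hE : (Nat.factorial (p - 1) : ℚ) + 1 + (p : ℚ) * ((bernoulli (p - 1) + 1 / p - 1) / (p - 1))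
      = ((((p:ℤ) - 1) * ((Nat.factorial (p-1) : ℤ) + 1)
          + (∑ k ∈ range p, (k:ℤ)^(p-1)) + 1 - p : ℤ) : ℚ) / ((p:ℚ) - 1)
        + ((p:ℚ) * bernoulli (p-1) - (∑ k ∈ range p, (k:ℚ)^(p-1))) / ((p:ℚ) - 1) := by
    push_cast
    field_simp
    ring
  rw [hE, Rat.cast_add, Rat.cast_div, Rat.cast_div]
  have hden : ‖((((p:ℚ) - 1) : ℚ) : ℚ_[p])‖ = 1 := by
    rw [show ((((p:ℚ) - 1) : ℚ) : ℚ_[p]) = ((p - 1 : ℕ) : ℚ_[p]) by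
      push_cast [Nat.cast_sub (show 1 ≤ p by omega)]; ring]
    exact gl_norm_nat_eq_one p (Nat.not_dvd_of_pos_of_lt (by omega) (by omega))
  refine le_trans (Padic.nonarchimedean _ _) (max_le ?_ ?_)
  · rw [norm_div, hden, div_one]
    rw [show (((((p:ℤ) - 1) * ((Nat.factorial (p-1) : ℤ) + 1)
          + (∑ k ∈ range p, (k:ℤ)^(p-1)) + 1 - p : ℤ) : ℚ) : ℚ_[p])
        = ((((p:ℤ) - 1) * ((Nat.factorial (p-1) : ℤ) + 1)
          + (∑ k ∈ range p, (k:ℤ)^(p-1)) + 1 - p : ℤ) : ℚ_[p]) by push_cast; ring]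
    have h := (Padic.norm_int_le_pow_iff_dvd
      ((((p:ℤ) - 1) * ((Nat.factorial (p-1) : ℤ) + 1)
        + (∑ k ∈ range p, (k:ℤ)^(p-1)) + 1 - p : ℤ)) 2).mpr (by exact_mod_cast gl_key_int p hp7)
    exact_mod_cast h
  · rw [norm_div, hden, div_one]
    rw [show (((p:ℚ) * bernoulli (p-1) - (∑ k ∈ range p, (k:ℚ)^(p-1)) : ℚ) : ℚ_[p])
        = -((((∑ k ∈ range p, (k:ℚ)^(p-1)) - (p:ℚ) * bernoulli (p-1) : ℚ)) : ℚ_[p]) by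
      push_cast; ring]
    rw [norm_neg]
    exact gl_faulhaber_tail p hp7
end

section
/- Let p ≥ 5 be an odd prime and set Q_1 = ∑_{a=1}^{p-1} q_p(a) and Q_2 = ∑_{a=1}^{p-1} q_p(a)². Then the Wilson quotient satisfies W_p ≡ Q_1 + (p/2)(2Q_1 - Q_1² - Q_2) (mod p²). -/
lemma WQ_pow_of_cube_zero {R : Type*} [CommRing R] (x : R) (hx : x ^ 3 = 0) (n : ℕ) :
    (1 + x) ^ n = 1 + n * x + (n.choose 2) * x ^ 2 := by
  induction n with
  | zero => simp
  | succ n ih =>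
    have hc : ((n+1).choose 2 : ℕ) = n + n.choose 2 := by
      rw [Nat.choose_succ_succ, Nat.choose_one_right]
    rw [pow_succ, ih]
    push_cast [hc]
    linear_combination (n.choose 2 : R) * hx

lemma WQ_prod_expand {R : Type*} [CommRing R] (π : R) (hπ : π ^ 3 = 0) (c : ℕ → R)
    (s : Finset ℕ) :
    2 * ∏ a ∈ s, (1 + π * c a)
      = 2 + 2 * π * (∑ a ∈ s, c a) + π ^ 2 * ((∑ a ∈ s, c a) ^ 2 - ∑ a ∈ s, (c a) ^ 2) := by
  classical
  induction s using Finset.induction_on with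
  | empty => simp
  | @insert a s ha ih =>
    rw [Finset.prod_insert ha, Finset.sum_insert ha, Finset.sum_insert ha]
    have h2 : 2 * ((1 + π * c a) * ∏ x ∈ s, (1 + π * c x))
        = (1 + π * c a) * (2 * ∏ x ∈ s, (1 + π * c x)) := by ring
    rw [h2, ih]
    linear_combination (c a * ((∑ x ∈ s, c x) ^ 2 - ∑ x ∈ s, (c x) ^ 2)) * hπ

lemma WQ_two_choose_two (n : ℕ) : 2 * n.choose 2 = n * (n - 1) := by
  induction n with
  | zero => simp
  | succ n ih =>
    rw [Nat.choose_succ_succ, Nat.choose_one_right, Nat.mul_add, ih]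
    cases n
    · simp
    · simp; ring

theorem wilson_quotient_via_fermat_sums (p : ℕ) [hp : Fact p.Prime]
    (hp5 : 5 ≤ p) (hodd : Odd p) (Q1 Q2 : ℚ)
    (hQ1 : Q1 = ∑ a ∈ Finset.Icc 1 (p - 1), (((a : ℚ) ^ (p - 1) - 1) / p))
    (hQ2 : Q2 = ∑ a ∈ Finset.Icc 1 (p - 1), (((a : ℚ) ^ (p - 1) - 1) / p) ^ 2) :
    ‖(((((Nat.factorial (p - 1) : ℚ) + 1) / p
        - (Q1 + ((p : ℚ) / 2) * (2 * Q1 - Q1 ^ 2 - Q2))) : ℚ) : ℚ_[p])‖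
      ≤ (p : ℝ) ^ (-2 : ℤ) := by
  have hp' := hp.out
  have hpz : Prime (p : ℤ) := Nat.prime_iff_prime_int.mp hp'
  have hp0 : (p : ℤ) ≠ 0 := by exact_mod_cast hp'.ne_zero
  have hpq0 : (p : ℚ) ≠ 0 := by exact_mod_cast hp'.ne_zero
  -- Fermat's little theorem divisibility
  have hfer : ∀ a ∈ Finset.Icc 1 (p-1), (p:ℤ) ∣ ((a:ℤ)^(p-1) - 1) := by
    intro a ha
    rw [Finset.mem_Icc] at ha
    have hnd : ¬ (p ∣ a) := by
      intro h
      have := Nat.le_of_dvd (by omega) h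
      omega
    have h1 : ((a : ℕ) : ZMod p) ≠ 0 := by
      rw [Ne, ZMod.natCast_eq_zero_iff]
      exact hnd
    have h2 : ((a : ℕ) : ZMod p)^(p-1) = 1 := ZMod.pow_card_sub_one_eq_one h1
    rw [← ZMod.intCast_zmod_eq_zero_iff_dvd]
    push_cast
    rw [h2]
    ring
  set f : ℕ → ℤ := fun a => ((a:ℤ)^(p-1) - 1) / p with hfdef
  have hfe : ∀ a ∈ Finset.Icc 1 (p-1), (p:ℤ) * f a = (a:ℤ)^(p-1) - 1 :=
    fun a ha => Int.mul_ediv_cancel' (hfer a ha)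
  obtain ⟨S1, hS1⟩ : ∃ s, s = ∑ a ∈ Finset.Icc 1 (p-1), f a := ⟨_, rfl⟩
  obtain ⟨S2, hS2⟩ : ∃ s, s = ∑ a ∈ Finset.Icc 1 (p-1), (f a)^2 := ⟨_, rfl⟩
  -- Wilson's theorem
  have hwil : (p:ℤ) ∣ (((p-1).factorial : ℕ) : ℤ) + 1 := by
    have hw : (((p-1).factorial : ℕ) : ZMod p) = -1 := ZMod.wilsons_lemma p
    rw [← ZMod.intCast_zmod_eq_zero_iff_dvd]
    push_cast
    rw [hw]
    ring
  obtain ⟨W, hWe⟩ : ∃ w, (p:ℤ) * w = (((p-1).factorial : ℕ) : ℤ) + 1 :=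
    ⟨_, Int.mul_ediv_cancel' hwil⟩
  -- the integer product identity
  have hprod : ∏ a ∈ Finset.Icc 1 (p-1), (1 + (p:ℤ) * f a)
      = (((p-1).factorial : ℕ) : ℤ)^(p-1) := by
    rw [Finset.prod_congr rfl (fun a ha => by rw [hfe a ha]; ring : ∀ a ∈ Finset.Icc 1 (p-1), (1 + (p:ℤ) * f a) = (a:ℤ)^(p-1))]
    rw [Finset.prod_pow]
    congr 1
    have h : (∏ i ∈ Finset.Icc 1 (p-1), i) = (p-1).factorial := by
      rw [← Finset.Ico_add_one_right_eq_Icc, Finset.prod_Ico_id_eq_factorial]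
    rw [← Nat.cast_prod, h]
  -- move to ZMod (p^3)
  have hπ3 : ((p : ℕ) : ZMod (p^3))^3 = 0 := by
    have h : ((p^3 : ℕ) : ZMod (p^3)) = 0 := ZMod.natCast_self _
    push_cast at h
    exact h
  have e1 : ((((p-1).factorial : ℕ) : ZMod (p^3))) = (p : ZMod (p^3)) * ((W : ℤ) : ZMod (p^3)) - 1 := by
    have h := congrArg (fun z : ℤ => ((z : ZMod (p^3)))) hWe
    push_cast at h
    linear_combination -h
  have heven : Even (p - 1) := Nat.Odd.sub_odd hodd odd_one
  have e2 : ((((p-1).factorial : ℕ) : ZMod (p^3)))^(p-1)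
      = 1 + ((p-1 : ℕ) : ZMod (p^3)) * (-((p : ZMod (p^3)) * ((W : ℤ) : ZMod (p^3))))
        + (((p-1).choose 2 : ℕ) : ZMod (p^3)) * (-((p : ZMod (p^3)) * ((W : ℤ) : ZMod (p^3))))^2 := by
    rw [e1]
    have h : (p : ZMod (p^3)) * ((W : ℤ) : ZMod (p^3)) - 1
        = -(1 + (-((p : ZMod (p^3)) * ((W : ℤ) : ZMod (p^3))))) := by ring
    rw [h, Even.neg_pow heven]
    exact WQ_pow_of_cube_zero _ (by linear_combination (-(((W : ℤ) : ZMod (p^3)))^3) * hπ3) (p-1)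
  have e3 : (∏ a ∈ Finset.Icc 1 (p-1), (1 + (p : ZMod (p^3)) * ((f a : ℤ) : ZMod (p^3))))
      = ((((p-1).factorial : ℕ) : ZMod (p^3)))^(p-1) := by
    have h := congrArg (fun z : ℤ => ((z : ZMod (p^3)))) hprod
    push_cast at h
    exact h
  have e4 := WQ_prod_expand (p : ZMod (p^3)) hπ3 (fun a => ((f a : ℤ) : ZMod (p^3)))
    (Finset.Icc 1 (p-1))
  have hA : (((2 + 2*(p:ℤ)*S1 + (p:ℤ)^2*(S1^2 - S2)) : ℤ) : ZMod (p^3))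
      = (((2 - 2*((p-1:ℕ):ℤ)*(p:ℤ)*W + 2*(((p-1).choose 2 : ℕ):ℤ)*(p:ℤ)^2*W^2) : ℤ) : ZMod (p^3)) := by
    rw [hS1, hS2]
    push_cast
    linear_combination -e4 + 2 * e3 + 2 * e2
  have hdvd3 : (p:ℤ)^3 ∣ ((2 + 2*(p:ℤ)*S1 + (p:ℤ)^2*(S1^2 - S2))
      - (2 - 2*((p-1:ℕ):ℤ)*(p:ℤ)*W + 2*(((p-1).choose 2 : ℕ):ℤ)*(p:ℤ)^2*W^2)) := by
    have h : ((((2 + 2*(p:ℤ)*S1 + (p:ℤ)^2*(S1^2 - S2))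
        - (2 - 2*((p-1:ℕ):ℤ)*(p:ℤ)*W + 2*(((p-1).choose 2 : ℕ):ℤ)*(p:ℤ)^2*W^2)) : ℤ) : ZMod (p^3)) = 0 := by
      push_cast at hA ⊢
      linear_combination hA
    rw [ZMod.intCast_zmod_eq_zero_iff_dvd] at h
    push_cast at h
    exact h
  have hp1 : 1 ≤ p := by omega
  have hn1 : ((p-1:ℕ):ℤ) = (p:ℤ) - 1 := by omega
  have hC : 2*(((p-1).choose 2 : ℕ):ℤ) = ((p:ℤ)-1)*((p:ℤ)-2) := by
    have h := congrArg (Nat.cast : ℕ → ℤ) (WQ_two_choose_two (p-1))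
    push_cast [Nat.cast_sub hp1, Nat.cast_sub (show 1 ≤ p - 1 by omega)] at h
    linear_combination h
  have hY2 : (p:ℤ)^2 ∣ (2*S1 + (p:ℤ)*(S1^2-S2) + 2*((p:ℤ)-1)*W
      - ((p:ℤ)-1)*((p:ℤ)-2)*(p:ℤ)*W^2) := by
    obtain ⟨c, hc⟩ := hdvd3
    refine ⟨c, mul_left_cancel₀ hp0 ?_⟩
    linear_combination hc - 2*(p:ℤ)*W*hn1 + (p:ℤ)^2*W^2*hC
  have hpY : (p:ℤ) ∣ (2*S1 + (p:ℤ)*(S1^2-S2) + 2*((p:ℤ)-1)*W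
      - ((p:ℤ)-1)*((p:ℤ)-2)*(p:ℤ)*W^2) := dvd_trans (dvd_pow_self _ two_ne_zero) hY2
  have hWS : (p:ℤ) ∣ S1 - W := by
    have h2 : (p:ℤ) ∣ 2*(S1-W) := by
      have h : 2*(S1-W) = (2*S1 + (p:ℤ)*(S1^2-S2) + 2*((p:ℤ)-1)*W
          - ((p:ℤ)-1)*((p:ℤ)-2)*(p:ℤ)*W^2)
          - (p:ℤ)*(S1^2 - S2 + 2*W - ((p:ℤ)-1)*((p:ℤ)-2)*W^2) := by ring
      rw [h]
      exact dvd_sub hpY (Dvd.intro _ rfl)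
    rcases hpz.dvd_mul.mp h2 with h | h
    · exfalso
      have := Int.le_of_dvd two_pos h
      omega
    · exact h
  have hbr : (p:ℤ) ∣ (2*S1^2 - ((p:ℤ)-1)*((p:ℤ)-2)*W^2) := by
    have h : 2*S1^2 - ((p:ℤ)-1)*((p:ℤ)-2)*W^2
        = 2*(S1-W)*(S1+W) + (p:ℤ)*((3 - (p:ℤ))*W^2) := by ring
    rw [h]
    exact dvd_add ((hWS.mul_left 2).mul_right (S1+W)) (Dvd.intro _ rfl)
  have hT : (p:ℤ)^2 ∣ (2*W - 2*S1 - (p:ℤ)*(2*S1 - S1^2 - S2)) := by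
    obtain ⟨y, hy⟩ := hY2
    obtain ⟨u, hu⟩ := hWS
    obtain ⟨v, hv⟩ := hbr
    refine ⟨-y - 2*u + v, ?_⟩
    linear_combination -hy - 2*(p:ℤ)*hu + (p:ℤ)*hv
  -- identify Q1, Q2, W with rational expressions
  have hQ1S : Q1 = ((S1 : ℤ) : ℚ) := by
    rw [hQ1, hS1]
    push_cast
    refine Finset.sum_congr rfl fun a ha => ?_
    have h : ((a:ℚ))^(p-1) - 1 = (p:ℚ) * ((f a : ℤ) : ℚ) := by
      exact_mod_cast congrArg (Int.cast : ℤ → ℚ) (hfe a ha).symm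
    rw [h, mul_div_cancel_left₀ _ hpq0]
  have hQ2S : Q2 = ((S2 : ℤ) : ℚ) := by
    rw [hQ2, hS2]
    push_cast
    refine Finset.sum_congr rfl fun a ha => ?_
    have h : ((a:ℚ))^(p-1) - 1 = (p:ℚ) * ((f a : ℤ) : ℚ) := by
      exact_mod_cast congrArg (Int.cast : ℤ → ℚ) (hfe a ha).symm
    rw [h, mul_div_cancel_left₀ _ hpq0]
  have hWq : (((p-1).factorial : ℚ) + 1) / p = ((W : ℤ) : ℚ) := by
    have h : ((p:ℚ)) * ((W:ℤ):ℚ) = ((p-1).factorial : ℚ) + 1 := by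
      exact_mod_cast congrArg (Int.cast : ℤ → ℚ) hWe
    rw [← h, mul_div_cancel_left₀ _ hpq0]
  obtain ⟨k, hk⟩ := hT
  have hD : ((((p-1).factorial : ℚ) + 1) / p - (Q1 + ((p:ℚ)/2)*(2*Q1 - Q1^2 - Q2)))
      = (p:ℚ)^2 * ((k:ℤ):ℚ) / 2 := by
    rw [hWq, hQ1S, hQ2S]
    have h := congrArg (Int.cast : ℤ → ℚ) hk
    push_cast at h
    field_simp
    linear_combination h
  rw [hD]
  push_cast
  rw [norm_div, norm_mul, norm_pow, Padic.norm_p]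
  have h2n : ‖(2 : ℚ_[p])‖ = 1 := by
    have hle : ‖((2:ℤ) : ℚ_[p])‖ ≤ 1 := Padic.norm_int_le_one _
    have hlt : ¬ ‖((2:ℤ) : ℚ_[p])‖ < 1 := by
      rw [Padic.norm_intCast_lt_one_iff]
      intro hd
      have := Int.le_of_dvd two_pos hd
      omega
    have h := le_antisymm hle (not_lt.mp hlt)
    simpa using h
  rw [h2n, div_one]
  have hk1 : ‖((k:ℤ) : ℚ_[p])‖ ≤ 1 := Padic.norm_int_le_one _
  have hppos : (0:ℝ) < (p:ℝ) := by positivity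
  calc ((p:ℝ))⁻¹^2 * ‖((k:ℤ):ℚ_[p])‖ ≤ ((p:ℝ))⁻¹^2 * 1 := by gcongr
    _ = (p:ℝ)^(-2:ℤ) := by
        rw [mul_one, zpow_neg, inv_pow]
        norm_cast
end
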